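/- arXiv:2406.09344 — 3 statements merged into one kernel-verified Lean document; each statement's English description precedes it below -/
import Mathlib

section
/- For each positive integer j, the map μ_j : ℝ² → ℝ², x ↦ |x|^{√(j²+j) - j} x^j (identifying ℝ² ≅ ℂ and using complex multiplication for x^j) is Hölder-continuously differentiable of class C^{⌊√(j²+j)⌋, √(j²+j) - ⌊√(j²+j)⌋}; equivalently μ_j ∈ C^{√(j²+j)}. -/
open Complex Real
open Set Filter Topology

section Homog
variable {F : Type*} [NormedAddCommGroup F] [NormedSpace ℝ F]
variable {G : Type*} [NormedAddCommGroup G] [NormedSpace ℝ G]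

/-- Positive homogeneity of degree `β`. -/
def PHomog (β : ℝ) (g : ℂ → F) : Prop := ∀ c : ℝ, 0 < c → ∀ x, g (c • x) = c ^ β • g x

/-- The package of properties we propagate through derivatives. -/
def Nice (β : ℝ) (g : ℂ → F) : Prop :=
  PHomog β g ∧ Continuous g ∧ ContDiffOn ℝ (⊤ : ℕ∞) g {(0 : ℂ)}ᶜ

theorem PHomog.zero_eq {β : ℝ} {g : ℂ → F} (hβ : 0 < β) (hg : PHomog β g) : g 0 = 0 := by
  have h := hg 2 (by norm_num) 0
  rw [smul_zero] at h
  have h2 : (1 : ℝ) < (2 : ℝ) ^ β := Real.one_lt_rpow_iff_of_pos (by norm_num) |>.2 (Or.inl ⟨by norm_num, hβ⟩)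
  have : ((2 : ℝ) ^ β - 1) • g 0 = 0 := by
    rw [sub_smul, one_smul, ← h, sub_self]
  rcases smul_eq_zero.1 this with h' | h'
  · exact absurd h' (by linarith)
  · exact h'

theorem PHomog.rescale {β : ℝ} {g : ℂ → F} (hg : PHomog β g) {x : ℂ} (hx : x ≠ 0) :
    g x = ‖x‖ ^ β • g (‖x‖⁻¹ • x) := by
  have h := hg ‖x‖ (norm_pos_iff.2 hx) (‖x‖⁻¹ • x)
  rwa [smul_inv_smul₀ (norm_ne_zero_iff.2 hx)] at h

theorem PHomog.bound {β : ℝ} {g : ℂ → F} (hβ : 0 < β) (hg : PHomog β g)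
    (hc : ContinuousOn g (Metric.sphere (0 : ℂ) 1)) :
    ∃ M : ℝ, 0 ≤ M ∧ ∀ x, ‖g x‖ ≤ M * ‖x‖ ^ β := by
  obtain ⟨M, hM⟩ := (isCompact_sphere (0 : ℂ) 1).exists_bound_of_continuousOn hc
  refine ⟨max M 0, le_max_right _ _, fun x => ?_⟩
  rcases eq_or_ne x 0 with rfl | hx
  · simp [hg.zero_eq hβ, Real.zero_rpow hβ.ne']
  · have hxn : (0 : ℝ) < ‖x‖ := norm_pos_iff.2 hx
    have hu : ‖x‖⁻¹ • x ∈ Metric.sphere (0 : ℂ) 1 := by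
      rw [mem_sphere_zero_iff_norm, norm_smul, norm_inv, norm_norm, inv_mul_cancel₀ hxn.ne']
    rw [hg.rescale hx, norm_smul, Real.norm_eq_abs,
      _root_.abs_of_nonneg (Real.rpow_nonneg (norm_nonneg x) β), mul_comm]
    gcongr
    exact (hM _ hu).trans (le_max_left _ _)

theorem PHomog.fderiv_ne_zero {β : ℝ} {g : ℂ → F} (hg : PHomog β g)
    (hd : ∀ x : ℂ, x ≠ 0 → DifferentiableAt ℝ g x) {c : ℝ} (hc : 0 < c) {x : ℂ} (hx : x ≠ 0) :
    fderiv ℝ g (c • x) = c ^ (β - 1) • fderiv ℝ g x := by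
  have hcx : c • x ≠ 0 := smul_ne_zero (by exact_mod_cast hc.ne') hx
  have hlin : HasFDerivAt (fun y : ℂ => c • y) (c • ContinuousLinearMap.id ℝ ℂ) x := by
    have := (c • ContinuousLinearMap.id ℝ ℂ).hasFDerivAt (x := x)
    exact this
  have H1 : HasFDerivAt (fun y => g (c • y))
      ((fderiv ℝ g (c • x)).comp (c • ContinuousLinearMap.id ℝ ℂ)) x :=
    ((hd _ hcx).hasFDerivAt).comp x hlin
  have H2 : HasFDerivAt (fun y => c ^ β • g y) (c ^ β • fderiv ℝ g x) x :=
    ((hd x hx).hasFDerivAt).const_smul _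
  have hfun : (fun y => g (c • y)) = fun y => c ^ β • g y := funext fun y => hg c hc y
  rw [hfun] at H1
  have heq := H1.unique H2
  ext v
  have h1 := congrArg (fun (L : ℂ →L[ℝ] F) => L v) heq
  simp only [ContinuousLinearMap.coe_comp', Function.comp_apply,
    ContinuousLinearMap.smul_apply, ContinuousLinearMap.coe_smul', Pi.smul_apply,
    ContinuousLinearMap.coe_id', id_eq] at h1
  rw [map_smul] at h1
  have : fderiv ℝ g (c • x) v = (c⁻¹ * c ^ β) • fderiv ℝ g x v := by
    rw [mul_smul, ← h1, ← smul_assoc, smul_eq_mul, inv_mul_cancel₀ hc.ne', one_smul]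
  rw [ContinuousLinearMap.smul_apply, this]
  congr 1
  rw [Real.rpow_sub hc, Real.rpow_one, div_eq_inv_mul]

theorem Nice.diffAt {β : ℝ} {g : ℂ → F} (h : Nice β g) {x : ℂ} (hx : x ≠ 0) :
    DifferentiableAt ℝ g x := by
  have h1 : DifferentiableOn ℝ g {(0 : ℂ)}ᶜ := h.2.2.differentiableOn (by simp)
  exact h1.differentiableAt (isOpen_compl_singleton.mem_nhds hx)

theorem Nice.fderiv_smooth {β : ℝ} {g : ℂ → F} (h : Nice β g) :
    ContDiffOn ℝ (⊤ : ℕ∞) (fderiv ℝ g) {(0 : ℂ)}ᶜ :=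
  h.2.2.fderiv_of_isOpen isOpen_compl_singleton (by exact_mod_cast le_top)

theorem nice_step {β : ℝ} {g : ℂ → F} (hβ : 1 < β) (h : Nice β g) :
    Differentiable ℝ g ∧ fderiv ℝ g 0 = 0 ∧ Nice (β - 1) (fderiv ℝ g) := by
  obtain ⟨hhom, hcont, hsm⟩ := h
  have hβ0 : 0 < β := by linarith
  obtain ⟨M, hM0, hM⟩ := hhom.bound hβ0 hcont.continuousOn
  -- derivative at zero
  have hder0 : HasFDerivAt g (0 : ℂ →L[ℝ] F) 0 := by
    rw [hasFDerivAt_iff_isLittleO_nhds_zero]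
    simp only [zero_add, hhom.zero_eq hβ0, ContinuousLinearMap.zero_apply, sub_zero]
    rw [Asymptotics.isLittleO_iff]
    intro c hc
    have htend : Tendsto (fun y : ℂ => M * ‖y‖ ^ (β - 1)) (𝓝 0) (𝓝 0) := by
      have h1 : Tendsto (fun y : ℂ => ‖y‖) (𝓝 0) (𝓝 0) := tendsto_norm_zero
      have h2 : ContinuousAt (fun t : ℝ => t ^ (β - 1)) 0 :=
        Real.continuousAt_rpow_const 0 (β - 1) (Or.inr (by linarith))
      have h3 := (h2.tendsto.comp h1)
      rw [Real.zero_rpow (by linarith : β - 1 ≠ 0)] at h3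
      simpa using h3.const_mul M
    filter_upwards [htend.eventually_le_const hc] with y hy
    calc ‖g y‖ ≤ M * ‖y‖ ^ β := hM y
      _ = (M * ‖y‖ ^ (β - 1)) * ‖y‖ := by
          rcases eq_or_ne y 0 with rfl | hy0
          · simp [Real.zero_rpow hβ0.ne', Real.zero_rpow (by linarith : β - 1 ≠ 0)]
          · rw [mul_assoc]
            congr 1
            rw [← Real.rpow_add_one (norm_ne_zero_iff.2 hy0), sub_add_cancel]
      _ ≤ c * ‖y‖ := by
          apply mul_le_mul_of_nonneg_right hy (norm_nonneg y)
  have hdiff : Differentiable ℝ g := by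
    intro x
    rcases eq_or_ne x 0 with rfl | hx
    · exact hder0.differentiableAt
    · exact Nice.diffAt ⟨hhom, hcont, hsm⟩ hx
  have hf0 : fderiv ℝ g 0 = 0 := hder0.fderiv
  have hdat : ∀ x : ℂ, x ≠ 0 → DifferentiableAt ℝ g x := fun x hx => hdiff x
  -- homogeneity of fderiv
  have hhom' : PHomog (β - 1) (fderiv ℝ g) := by
    intro c hc x
    rcases eq_or_ne x 0 with rfl | hx
    · simp [hf0]
    · exact hhom.fderiv_ne_zero hdat hc hx
  -- smoothness of fderiv off 0
  have hsm' : ContDiffOn ℝ (⊤ : ℕ∞) (fderiv ℝ g) {(0 : ℂ)}ᶜ :=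
    Nice.fderiv_smooth ⟨hhom, hcont, hsm⟩
  -- continuity of fderiv
  have hconton : ContinuousOn (fderiv ℝ g) {(0 : ℂ)}ᶜ := hsm'.continuousOn
  obtain ⟨L, hL0, hL⟩ := hhom'.bound (by linarith) (hconton.mono (by
    intro z hz
    simp only [mem_compl_iff, mem_singleton_iff]
    intro h0
    rw [h0] at hz
    simp at hz))
  have hcont' : Continuous (fderiv ℝ g) := by
    rw [continuous_iff_continuousAt]
    intro x
    rcases eq_or_ne x 0 with rfl | hx
    · have : Tendsto (fderiv ℝ g) (𝓝 0) (𝓝 0) := by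
        apply squeeze_zero_norm hL
        have h1 : Tendsto (fun y : ℂ => ‖y‖) (𝓝 0) (𝓝 0) := tendsto_norm_zero
        have h2 : ContinuousAt (fun t : ℝ => t ^ (β - 1)) 0 :=
          Real.continuousAt_rpow_const 0 (β - 1) (Or.inr (by linarith))
        have h3 := (h2.tendsto.comp h1)
        rw [Real.zero_rpow (by linarith : β - 1 ≠ 0)] at h3
        simpa using h3.const_mul L
      rwa [ContinuousAt, hf0]
    · exact hconton.continuousAt (isOpen_compl_singleton.mem_nhds hx)
  exact ⟨hdiff, hf0, hhom', hcont', hsm'⟩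

theorem Nice.comp_isometry {β : ℝ} {g : ℂ → F} (h : Nice β g) (e : F ≃ₗᵢ[ℝ] G) :
    Nice β (⇑e ∘ g) := by
  obtain ⟨hhom, hcont, hsm⟩ := h
  refine ⟨?_, e.continuous.comp hcont, ?_⟩
  · intro c hc x
    simp only [Function.comp_apply, hhom c hc x, map_smul]
  · exact (e.toContinuousLinearEquiv.toContinuousLinearMap.contDiff).comp_contDiffOn hsm

theorem nice_iteratedFDeriv {β : ℝ} {g : ℂ → F} (h : Nice β g) :
    ∀ m : ℕ, (m : ℝ) < β → Nice (β - m) (iteratedFDeriv ℝ m g) := by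
  intro m
  induction m with
  | zero =>
    intro _
    rw [iteratedFDeriv_zero_eq_comp]
    simpa using h.comp_isometry (continuousMultilinearCurryFin0 ℝ ℂ F).symm
  | succ m ih =>
    intro hm
    have hm' : (m : ℝ) < β := by push_cast at hm ⊢; linarith
    have hβm : 1 < β - m := by push_cast at hm; linarith
    obtain ⟨_, _, h2⟩ := nice_step hβm (ih hm')
    rw [iteratedFDeriv_succ_eq_comp_left]
    have h3 := h2.comp_isometry
      (continuousMultilinearCurryLeftEquiv ℝ (fun _ : Fin (m + 1) => ℂ) F).symm
    have : β - (m + 1 : ℕ) = β - m - 1 := by push_cast; ring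
    rw [this]
    exact h3

theorem nice_holder {β : ℝ} {g : ℂ → F} (hβ0 : 0 < β) (hβ1 : β < 1) (h : Nice β g) :
    ∃ C : NNReal, HolderWith C β.toNNReal g := by
  obtain ⟨M, hM0, hM⟩ := h.1.bound hβ0 h.2.1.continuousOn
  have hdat : ∀ x : ℂ, x ≠ 0 → DifferentiableAt ℝ g x := fun x hx => h.diffAt hx
  have hfcont : ContinuousOn (fderiv ℝ g) {(0 : ℂ)}ᶜ := h.fderiv_smooth.continuousOn
  obtain ⟨L, hL⟩ := (isCompact_sphere (0 : ℂ) 1).exists_bound_of_continuousOn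
    (hfcont.mono (by
      intro z hz
      simp only [mem_compl_iff, mem_singleton_iff]
      intro h0
      rw [h0] at hz
      simp at hz))
  set L' := max L 0 with hL'def
  have hL'0 : 0 ≤ L' := le_max_right _ _
  have hfb : ∀ z : ℂ, z ≠ 0 → ‖fderiv ℝ g z‖ ≤ L' * ‖z‖ ^ (β - 1) := by
    intro z hz
    have hzn : (0 : ℝ) < ‖z‖ := norm_pos_iff.2 hz
    have hu0 : ‖z‖⁻¹ • z ≠ 0 := smul_ne_zero (by positivity) hz
    have hu : ‖z‖⁻¹ • z ∈ Metric.sphere (0 : ℂ) 1 := by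
      rw [mem_sphere_zero_iff_norm, norm_smul, norm_inv, norm_norm, inv_mul_cancel₀ hzn.ne']
    have key := h.1.fderiv_ne_zero hdat (c := ‖z‖) hzn (x := ‖z‖⁻¹ • z) hu0
    rw [smul_inv_smul₀ hzn.ne'] at key
    have hns : ‖fderiv ℝ g z‖ = ‖z‖ ^ (β - 1) * ‖fderiv ℝ g (‖z‖⁻¹ • z)‖ := by
      rw [key]
      rw [norm_smul (‖z‖ ^ (β - 1)) (fderiv ℝ g (‖z‖⁻¹ • z)), Real.norm_eq_abs,
        _root_.abs_of_nonneg (Real.rpow_nonneg (norm_nonneg z) _)]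
    rw [hns, mul_comm]
    gcongr
    exact (hL _ hu).trans (le_max_left _ _)
  set Cr := 4 * M + L' with hCrdef
  have hCr0 : 0 ≤ Cr := by positivity
  have key : ∀ x y : ℂ, ‖y‖ ≤ ‖x‖ → ‖g x - g y‖ ≤ Cr * ‖x - y‖ ^ β := by
    intro x y hyx
    rcases eq_or_ne x y with rfl | hne
    · simp only [sub_self, norm_zero]
      positivity
    have hd0 : (0 : ℝ) < ‖x - y‖ := by
      rw [norm_pos_iff, sub_ne_zero]; exact hne
    rcases le_or_gt ‖x‖ (2 * ‖x - y‖) with hcase | hcase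
    · -- far case
      have h1 : ‖g x - g y‖ ≤ M * ‖x‖ ^ β + M * ‖y‖ ^ β :=
        (norm_sub_le _ _).trans (add_le_add (hM x) (hM y))
      have h2 : M * ‖y‖ ^ β ≤ M * ‖x‖ ^ β :=
        mul_le_mul_of_nonneg_left (Real.rpow_le_rpow (norm_nonneg y) hyx hβ0.le) hM0
      have h3 : ‖x‖ ^ β ≤ (2 * ‖x - y‖) ^ β :=
        Real.rpow_le_rpow (norm_nonneg x) hcase hβ0.le
      have h4 : (2 * ‖x - y‖ : ℝ) ^ β = 2 ^ β * ‖x - y‖ ^ β :=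
        Real.mul_rpow (by norm_num) (norm_nonneg _)
      have h5 : (2 : ℝ) ^ β ≤ 2 := by
        calc (2 : ℝ) ^ β ≤ 2 ^ (1 : ℝ) :=
              Real.rpow_le_rpow_of_exponent_le (by norm_num) hβ1.le
          _ = 2 := Real.rpow_one 2
      have hxb : (0 : ℝ) ≤ ‖x - y‖ ^ β := Real.rpow_nonneg (norm_nonneg _) β
      calc ‖g x - g y‖ ≤ M * ‖x‖ ^ β + M * ‖x‖ ^ β := by linarith
        _ = 2 * M * ‖x‖ ^ β := by ring
        _ ≤ 2 * M * (2 ^ β * ‖x - y‖ ^ β) := by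
            rw [← h4]; gcongr
        _ ≤ 2 * M * (2 * ‖x - y‖ ^ β) := by gcongr
        _ = 4 * M * ‖x - y‖ ^ β := by ring
        _ ≤ Cr * ‖x - y‖ ^ β := by
            apply mul_le_mul_of_nonneg_right _ hxb
            rw [hCrdef]; linarith
    · -- near case: use mean value on the segment
      have hxpos : (0 : ℝ) < ‖x‖ := lt_trans (by positivity) hcase
      have hseg : ∀ z ∈ segment ℝ x y, ‖x‖ / 2 ≤ ‖z‖ := by
        rintro z ⟨a, b, ha, hb, hab, rfl⟩
        have hz : a • x + b • y = x - b • (x - y) := by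
          have hax : a = 1 - b := by linarith
          rw [hax]; module
        rw [hz]
        have h1 : ‖x‖ - ‖b • (x - y)‖ ≤ ‖x - b • (x - y)‖ := norm_sub_norm_le _ _
        have h2 : ‖b • (x - y)‖ = b * ‖x - y‖ := by
          rw [norm_smul, Real.norm_eq_abs, _root_.abs_of_nonneg hb]
        have h3 : b * ‖x - y‖ ≤ ‖x - y‖ := by
          nlinarith
        nlinarith
      have hzne : ∀ z ∈ segment ℝ x y, z ≠ 0 := by
        intro z hz h0
        have := hseg z hz
        rw [h0, norm_zero] at this
        linarith
      have hbd : ∀ z ∈ segment ℝ x y, ‖fderiv ℝ g z‖ ≤ L' * (‖x‖ / 2) ^ (β - 1) := by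
        intro z hz
        refine (hfb z (hzne z hz)).trans ?_
        exact mul_le_mul_of_nonneg_left
          (Real.rpow_le_rpow_of_nonpos (by positivity) (hseg z hz) (by linarith)) hL'0
      have hmvt := (convex_segment x y).norm_image_sub_le_of_norm_hasFDerivWithin_le
        (f := g) (f' := fderiv ℝ g)
        (fun z hz => ((hdat z (hzne z hz)).hasFDerivAt).hasFDerivWithinAt)
        hbd (left_mem_segment ℝ x y) (right_mem_segment ℝ x y)
      -- hmvt : ‖g y - g x‖ ≤ L' * (‖x‖/2)^(β-1) * ‖y - x‖
      rw [norm_sub_rev]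
      refine hmvt.trans ?_
      have hdle : ‖x - y‖ ≤ ‖x‖ / 2 := by linarith
      have hhalf : (0 : ℝ) < ‖x‖ / 2 := by linarith
      have hstp : (‖x‖ / 2) ^ (β - 1) * ‖x - y‖ ≤ ‖x - y‖ ^ β := by
        have e2 : ‖x - y‖ ^ (1 - β) ≤ (‖x‖ / 2) ^ (1 - β) :=
          Real.rpow_le_rpow (norm_nonneg _) hdle (by linarith)
        have e3 : (‖x‖ / 2) ^ (β - 1) * (‖x‖ / 2) ^ (1 - β) = 1 := by
          rw [← Real.rpow_add hhalf]
          norm_num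
        have e4 : (‖x‖ / 2) ^ (β - 1) * ‖x - y‖ ^ (1 - β) ≤ 1 := by
          calc (‖x‖ / 2) ^ (β - 1) * ‖x - y‖ ^ (1 - β)
              ≤ (‖x‖ / 2) ^ (β - 1) * (‖x‖ / 2) ^ (1 - β) :=
                mul_le_mul_of_nonneg_left e2 (Real.rpow_nonneg (by positivity) _)
            _ = 1 := e3
        calc (‖x‖ / 2) ^ (β - 1) * ‖x - y‖
            = (‖x‖ / 2) ^ (β - 1) * (‖x - y‖ ^ (1 - β) * ‖x - y‖ ^ β) := by
              congr 1
              rw [← Real.rpow_add hd0, sub_add_cancel, Real.rpow_one]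
          _ = (‖x‖ / 2) ^ (β - 1) * ‖x - y‖ ^ (1 - β) * ‖x - y‖ ^ β := by ring
          _ ≤ 1 * ‖x - y‖ ^ β :=
              mul_le_mul_of_nonneg_right e4 (Real.rpow_nonneg (norm_nonneg _) _)
          _ = ‖x - y‖ ^ β := one_mul _
      calc L' * (‖x‖ / 2) ^ (β - 1) * ‖y - x‖
          = L' * ((‖x‖ / 2) ^ (β - 1) * ‖x - y‖) := by
            rw [norm_sub_rev y x]; ring
        _ ≤ L' * ‖x - y‖ ^ β := mul_le_mul_of_nonneg_left hstp hL'0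
        _ ≤ Cr * ‖x - y‖ ^ β := by
            apply mul_le_mul_of_nonneg_right _ (Real.rpow_nonneg (norm_nonneg _) _)
            rw [hCrdef]; linarith
  -- conclude HolderWith
  refine ⟨Cr.toNNReal, fun x y => ?_⟩
  have hdist : dist (g x) (g y) ≤ Cr * dist x y ^ β := by
    rcases le_total ‖y‖ ‖x‖ with hc | hc
    · rw [dist_eq_norm, dist_eq_norm]
      exact key x y hc
    · rw [dist_eq_norm, dist_eq_norm, norm_sub_rev, norm_sub_rev x y]
      exact key y x hc
  rw [edist_dist, edist_dist]
  calc ENNReal.ofReal (dist (g x) (g y)) ≤ ENNReal.ofReal (Cr * dist x y ^ β) :=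
        ENNReal.ofReal_le_ofReal hdist
    _ = ↑Cr.toNNReal * ENNReal.ofReal (dist x y) ^ ((β.toNNReal : ℝ)) := by
        rw [ENNReal.ofReal_mul hCr0, ← ENNReal.ofReal_rpow_of_nonneg dist_nonneg hβ0.le,
          Real.coe_toNNReal _ hβ0.le]
        rfl

end Homog

/-- The map `μ_j : ℝ² ≅ ℂ → ℂ`, `x ↦ |x|^{√(j²+j)-j} x^j`. -/
noncomputable def muSW (j : ℕ) (x : ℂ) : ℂ :=
  ((‖x‖ ^ (Real.sqrt ((j : ℝ) ^ 2 + j) - j) : ℝ) : ℂ) * x ^ j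

theorem sqrt_bounds (j : ℕ) (hj : 0 < j) :
    (j : ℝ) < Real.sqrt ((j : ℝ) ^ 2 + j) ∧ Real.sqrt ((j : ℝ) ^ 2 + j) < j + 1 := by
  have hj' : (0 : ℝ) < j := by exact_mod_cast hj
  constructor
  · have h := Real.sqrt_lt_sqrt (by positivity : (0:ℝ) ≤ (j : ℝ) ^ 2)
      (by linarith : (j : ℝ) ^ 2 < (j : ℝ) ^ 2 + j)
    rwa [Real.sqrt_sq hj'.le] at h
  · have h := Real.sqrt_lt_sqrt (by positivity : (0:ℝ) ≤ (j : ℝ) ^ 2 + j)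
      (by nlinarith : (j : ℝ) ^ 2 + j < ((j : ℝ) + 1) ^ 2)
    rwa [Real.sqrt_sq (by positivity)] at h

theorem nice_muSW (j : ℕ) (hj : 0 < j) : Nice (Real.sqrt ((j : ℝ) ^ 2 + j)) (muSW j) := by
  obtain ⟨hβl, hβu⟩ := sqrt_bounds j hj
  set β := Real.sqrt ((j : ℝ) ^ 2 + j) with hβdef
  have hα0 : (0 : ℝ) ≤ β - j := by linarith
  refine ⟨?_, ?_, ?_⟩
  · -- homogeneity
    intro c hc x
    have h1 : ‖c • x‖ = c * ‖x‖ := by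
      rw [norm_smul, Real.norm_eq_abs, _root_.abs_of_pos hc]
    have h2 : (c • x) ^ j = (c : ℂ) ^ j * x ^ j := by
      rw [Complex.real_smul, mul_pow]
    have hc3 : c ^ (β - (j : ℝ)) * c ^ (j : ℕ) = c ^ β := by
      rw [← Real.rpow_natCast c j, ← Real.rpow_add hc, sub_add_cancel]
    simp only [muSW]
    rw [h1, Real.mul_rpow hc.le (norm_nonneg x), h2, Complex.real_smul, ← hc3]
    push_cast
    ring
  · -- continuity
    apply Continuous.mul
    · exact Complex.continuous_ofReal.comp
        (continuous_norm.rpow_const (fun x => Or.inr hα0))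
    · exact continuous_pow j
  · -- smoothness away from 0
    intro x hx
    have hx0 : x ≠ 0 := by simpa using hx
    apply ContDiffAt.contDiffWithinAt
    have hn : ‖x‖ ≠ 0 := norm_ne_zero_iff.2 hx0
    have c1 : ContDiffAt ℝ (⊤ : ℕ∞) (fun y : ℂ => ‖y‖) x := contDiffAt_norm ℝ hx0
    have c2 : ContDiffAt ℝ (⊤ : ℕ∞) (fun y : ℂ => ‖y‖ ^ (β - (j : ℝ))) x :=
      c1.rpow_const_of_ne hn
    have c3 : ContDiffAt ℝ (⊤ : ℕ∞) (fun y : ℂ => ((‖y‖ ^ (β - (j : ℝ)) : ℝ) : ℂ)) x :=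
      Complex.ofRealCLM.contDiff.comp_contDiffAt x c2
    have c4 : ContDiffAt ℝ (⊤ : ℕ∞) (fun y : ℂ => y ^ j) x := contDiffAt_id.pow j
    exact c3.mul c4

/-- `μ_j` is of class `C^{√(j²+j)}`: it is `j = ⌊√(j²+j)⌋` times continuously
differentiable and its `j`-th derivative is `(√(j²+j)-j)`-Hölder continuous. -/
theorem muSW_Holder_class (j : ℕ) (hj : 0 < j) :
    ContDiff ℝ (j : ℕ∞) (muSW j) ∧
    ∃ C : NNReal, HolderWith C (Real.sqrt ((j : ℝ) ^ 2 + j) - j).toNNReal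
      (iteratedFDeriv ℝ j (muSW j)) := by
  obtain ⟨hβl, hβu⟩ := sqrt_bounds j hj
  have hN := nice_muSW j hj
  constructor
  · refine contDiff_iff_continuous_differentiable.2 ⟨?_, ?_⟩
    · intro m hm
      have hmj : m ≤ j := by exact_mod_cast hm
      have : (m : ℝ) ≤ j := by exact_mod_cast hmj
      exact (nice_iteratedFDeriv hN m (lt_of_le_of_lt this hβl)).2.1
    · intro m hm
      have hmj : m < j := by exact_mod_cast hm
      have hm1 : (m : ℝ) + 1 ≤ j := by exact_mod_cast hmj
      have h1 : (m : ℝ) < Real.sqrt ((j : ℝ) ^ 2 + j) := by linarith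
      have h2 : 1 < Real.sqrt ((j : ℝ) ^ 2 + j) - m := by linarith
      exact (nice_step h2 (nice_iteratedFDeriv hN m h1)).1
  · have hα0 : 0 < Real.sqrt ((j : ℝ) ^ 2 + j) - j := by linarith
    have hα1 : Real.sqrt ((j : ℝ) ^ 2 + j) - j < 1 := by linarith
    exact nice_holder hα0 hα1 (nice_iteratedFDeriv hN j hβl)
end

section
/- Let φ be holomorphic on an open set U ⊂ ℂ, let ρ = |φ|, g = φ/|φ| (defined away from zeros of φ), and fix a positive integer j. Then away from the zeros of φ, the function u := ρ^{√(j²+j)-j} φ^j = ρ^{√(j²+j)} g^j satisfies div(g ∇u) = 0. -/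
open Complex Real

noncomputable def pdx {E : Type*} [NormedAddCommGroup E] [NormedSpace ℝ E]
    (f : ℂ → E) (z : ℂ) : E :=
  deriv (fun t : ℝ => f (z + (t : ℂ))) 0

noncomputable def pdy {E : Type*} [NormedAddCommGroup E] [NormedSpace ℝ E]
    (f : ℂ → E) (z : ℂ) : E :=
  deriv (fun t : ℝ => f (z + (t : ℂ) * Complex.I)) 0

lemma pdx_congr {f₁ f₂ : ℂ → ℂ} {z : ℂ} (h : f₁ =ᶠ[nhds z] f₂) : pdx f₁ z = pdx f₂ z := by
  apply Filter.EventuallyEq.deriv_eq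
  have ht : Filter.Tendsto (fun t : ℝ => z + (t : ℂ)) (nhds 0) (nhds z) := by
    have : Continuous (fun t : ℝ => z + (t : ℂ)) := by continuity
    simpa using this.tendsto (0 : ℝ)
  exact h.comp_tendsto ht

lemma pdy_congr {f₁ f₂ : ℂ → ℂ} {z : ℂ} (h : f₁ =ᶠ[nhds z] f₂) : pdy f₁ z = pdy f₂ z := by
  apply Filter.EventuallyEq.deriv_eq
  have ht : Filter.Tendsto (fun t : ℝ => z + (t : ℂ) * Complex.I) (nhds 0) (nhds z) := by
    have : Continuous (fun t : ℝ => z + (t : ℂ) * Complex.I) := by continuity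
    simpa using this.tendsto (0 : ℝ)
  exact h.comp_tendsto ht

lemma curveX {f : ℂ → ℂ} {f' : ℂ} {w : ℂ} (hf : HasDerivAt f f' w) :
    HasDerivAt (fun t : ℝ => f (w + (t : ℂ))) f' 0 := by
  have hc : HasDerivAt (fun t : ℝ => w + (t : ℂ)) (1 : ℂ) 0 := by
    simpa using (Complex.ofRealCLM.hasDerivAt (x := (0:ℝ))).const_add w
  have := HasDerivAt.scomp_of_eq (0:ℝ) hf hc (by simp)
  simpa [Function.comp_def] using this

lemma curveY {f : ℂ → ℂ} {f' : ℂ} {w : ℂ} (hf : HasDerivAt f f' w) :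
    HasDerivAt (fun t : ℝ => f (w + (t : ℂ) * Complex.I)) (Complex.I * f') 0 := by
  have hc : HasDerivAt (fun t : ℝ => w + (t : ℂ) * Complex.I) (Complex.I : ℂ) 0 := by
    simpa using ((Complex.ofRealCLM.hasDerivAt (x := (0:ℝ))).mul_const Complex.I).const_add w
  have := HasDerivAt.scomp_of_eq (0:ℝ) hf hc (by simp)
  simpa [Function.comp_def, smul_eq_mul, mul_comm] using this

lemma curve_re {k : ℝ → ℂ} {k' : ℂ} {t : ℝ} (hk : HasDerivAt k k' t) :
    HasDerivAt (fun t => (((k t).re : ℝ) : ℂ)) ((k'.re : ℝ) : ℂ) t := by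
  have h1 : HasDerivAt (fun t => (k t).re) k'.re t := by
    have := (Complex.reCLM.hasFDerivAt (x := k t)).comp_hasDerivAt t hk
    simpa [Function.comp_def] using this
  exact h1.ofReal_comp

lemma curve_shape {k : ℝ → ℂ} {k' : ℂ} {t : ℝ} (A B : ℂ) (hk : HasDerivAt k k' t) :
    HasDerivAt (fun t => A * (((k t).re : ℝ) : ℂ) + B * k t)
      (A * ((k'.re : ℝ) : ℂ) + B * k') t :=
  ((curve_re hk).const_mul A).add (hk.const_mul B)

/-- For `φ` holomorphic and nonvanishing on an open set `U`, `ρ = |φ|`, `g = φ/|φ|` and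
`u = ρ^{√(j²+j)-j} φ^j`, one has `div(g ∇u) = 0` pointwise on `U`. -/
theorem div_g_grad_u_eq_zero_away_from_zeros (U : Set ℂ) (hU : IsOpen U) (φ : ℂ → ℂ)
    (hφ : DifferentiableOn ℂ φ U) (h0 : ∀ z ∈ U, φ z ≠ 0) (j : ℕ) (hj : 0 < j)
    (g u : ℂ → ℂ)
    (hg : ∀ z, g z = φ z / ((‖φ z‖ : ℝ) : ℂ))
    (hu : ∀ z, u z =
      (((‖φ z‖ : ℝ) ^ (Real.sqrt ((j : ℝ) ^ 2 + j) - j) : ℝ) : ℂ) * φ z ^ j) :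
    ∀ z ∈ U,
      pdx (fun w => g w * pdx u w) z + pdy (fun w => g w * pdy u w) z = 0 := by
  intro z hz
  set c : ℝ := Real.sqrt ((j : ℝ) ^ 2 + j) - j with hc
  have hφz : φ z ≠ 0 := h0 z hz
  -- a neighborhood O of z inside U where φ w / φ z stays in the slit plane
  have h1 : ∀ᶠ w in nhds z, φ w / φ z ∈ Complex.slitPlane := by
    have hca : ContinuousAt (fun w => φ w / φ z) z :=
      ((hφ.differentiableAt (hU.mem_nhds hz)).continuousAt).div_const _
    have hval : φ z / φ z ∈ Complex.slitPlane := by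
      rw [div_self hφz]; exact Complex.one_mem_slitPlane
    exact hca.eventually_mem (Complex.isOpen_slitPlane.mem_nhds hval)
  have h2 : ∀ᶠ w in nhds z, w ∈ U := hU.mem_nhds hz
  obtain ⟨O, hO1, hOopen, hzO⟩ := eventually_nhds_iff.mp (h2.and h1)
  -- the local logarithm ψ
  set ψ : ℂ → ℂ := fun w => Complex.log (φ w / φ z) + Complex.log (φ z) with hψdef
  have hψdiff : ∀ w ∈ O, DifferentiableAt ℂ ψ w := by
    intro w hw
    exact (((hφ.differentiableAt (hU.mem_nhds (hO1 w hw).1)).div_const _).clog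
      (hO1 w hw).2).add_const _
  have hψexp : ∀ w ∈ O, Complex.exp (ψ w) = φ w := by
    intro w hw
    have hw0 : φ w ≠ 0 := h0 w (hO1 w hw).1
    rw [hψdef]
    rw [Complex.exp_add, Complex.exp_log (div_ne_zero hw0 hφz), Complex.exp_log hφz]
    field_simp
  set ψ₁ : ℂ → ℂ := deriv ψ with hψ₁def
  have Hψ : ∀ w ∈ O, HasDerivAt ψ (ψ₁ w) w := fun w hw => (hψdiff w hw).hasDerivAt
  have hψO : DifferentiableOn ℂ ψ O := fun w hw => (hψdiff w hw).differentiableWithinAt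
  have hψanal : AnalyticOnNhd ℂ ψ O := hψO.analyticOnNhd hOopen
  have hψ₁diff : DifferentiableAt ℂ ψ₁ z := ((hψanal.deriv z hzO).differentiableAt)
  set ψ₂ : ℂ := deriv ψ₁ z with hψ₂def
  have Hψ₁ : HasDerivAt ψ₁ ψ₂ z := hψ₁diff.hasDerivAt
  -- |φ| in terms of ψ
  have habs : ∀ w ∈ O, ‖φ w‖ = Real.exp ((ψ w).re) := by
    intro w hw; rw [← hψexp w hw, Complex.norm_exp]
  -- u and g in terms of ψ on O
  have keyU : ∀ w ∈ O, u w =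
      Complex.exp ((c : ℂ) * (((ψ w).re : ℝ) : ℂ) + (j : ℂ) * ψ w) := by
    intro w hw
    rw [hu w, habs w hw, ← hψexp w hw, ← Real.exp_mul, ← Complex.exp_nat_mul,
      Complex.ofReal_exp, ← Complex.exp_add]
    congr 1
    push_cast
    ring
  have keyG : ∀ w ∈ O, g w = Complex.exp (ψ w - (((ψ w).re : ℝ) : ℂ)) := by
    intro w hw
    rw [hg w, habs w hw, ← hψexp w hw, Complex.ofReal_exp, ← Complex.exp_sub]
  -- pdx u and pdy u on O
  have keyPdxU : ∀ w ∈ O, pdx u w =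
      Complex.exp ((c : ℂ) * (((ψ w).re : ℝ) : ℂ) + (j : ℂ) * ψ w) *
        ((c : ℂ) * (((ψ₁ w).re : ℝ) : ℂ) + (j : ℂ) * ψ₁ w) := by
    intro w hw
    have hEq : u =ᶠ[nhds w]
        fun w' => Complex.exp ((c : ℂ) * (((ψ w').re : ℝ) : ℂ) + (j : ℂ) * ψ w') :=
      Filter.eventuallyEq_of_mem (hOopen.mem_nhds hw) keyU
    rw [pdx_congr hEq]
    have HU := (curve_shape (c : ℂ) (j : ℂ) (curveX (Hψ w hw))).cexp
    have := HU.deriv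
    simp only [Complex.ofReal_zero, add_zero] at this
    exact this
  have keyPdyU : ∀ w ∈ O, pdy u w =
      Complex.exp ((c : ℂ) * (((ψ w).re : ℝ) : ℂ) + (j : ℂ) * ψ w) *
        ((c : ℂ) * ((((Complex.I * ψ₁ w).re : ℝ)) : ℂ) + (j : ℂ) * (Complex.I * ψ₁ w)) := by
    intro w hw
    have hEq : u =ᶠ[nhds w]
        fun w' => Complex.exp ((c : ℂ) * (((ψ w').re : ℝ) : ℂ) + (j : ℂ) * ψ w') :=
      Filter.eventuallyEq_of_mem (hOopen.mem_nhds hw) keyU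
    rw [pdy_congr hEq]
    have HU := (curve_shape (c : ℂ) (j : ℂ) (curveY (Hψ w hw))).cexp
    have := HU.deriv
    simp only [Complex.ofReal_zero, zero_mul, add_zero] at this
    exact this
  -- the products g * pdx u and g * pdy u on O
  have hF : (fun w => g w * pdx u w) =ᶠ[nhds z] fun w =>
      ((c : ℂ) * (((ψ₁ w).re : ℝ) : ℂ) + (j : ℂ) * ψ₁ w) *
        Complex.exp (((c : ℂ) - 1) * (((ψ w).re : ℝ) : ℂ) + ((j : ℂ) + 1) * ψ w) := by
    apply Filter.eventuallyEq_of_mem (hOopen.mem_nhds hzO)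
    intro w hw
    show g w * pdx u w = _
    rw [keyG w hw, keyPdxU w hw, ← mul_assoc, ← Complex.exp_add]
    rw [show (ψ w - (((ψ w).re : ℝ) : ℂ)) + ((c : ℂ) * (((ψ w).re : ℝ) : ℂ) + (j : ℂ) * ψ w) =
      ((c : ℂ) - 1) * (((ψ w).re : ℝ) : ℂ) + ((j : ℂ) + 1) * ψ w from by ring, mul_comm]
  have hG : (fun w => g w * pdy u w) =ᶠ[nhds z] fun w =>
      ((c : ℂ) * ((((Complex.I * ψ₁ w).re : ℝ)) : ℂ) + (j : ℂ) * (Complex.I * ψ₁ w)) *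
        Complex.exp (((c : ℂ) - 1) * (((ψ w).re : ℝ) : ℂ) + ((j : ℂ) + 1) * ψ w) := by
    apply Filter.eventuallyEq_of_mem (hOopen.mem_nhds hzO)
    intro w hw
    show g w * pdy u w = _
    rw [keyG w hw, keyPdyU w hw, ← mul_assoc, ← Complex.exp_add]
    rw [show (ψ w - (((ψ w).re : ℝ) : ℂ)) + ((c : ℂ) * (((ψ w).re : ℝ) : ℂ) + (j : ℂ) * ψ w) =
      ((c : ℂ) - 1) * (((ψ w).re : ℝ) : ℂ) + ((j : ℂ) + 1) * ψ w from by ring, mul_comm]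
  rw [pdx_congr hF, pdy_congr hG]
  -- now compute the outer derivatives at z
  have HPx := curve_shape (c : ℂ) (j : ℂ) (curveX Hψ₁)
  have HMx := (curve_shape ((c : ℂ) - 1) ((j : ℂ) + 1) (curveX (Hψ z hzO))).cexp
  have HFx := HPx.mul HMx
  have HQy := curve_shape (c : ℂ) (j : ℂ) ((curveY Hψ₁).const_mul Complex.I)
  have HMy := (curve_shape ((c : ℂ) - 1) ((j : ℂ) + 1) (curveY (Hψ z hzO))).cexp
  have HGy := HQy.mul HMy
  have e1 := HFx.deriv
  have e2 := HGy.deriv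
  simp only [Complex.ofReal_zero, zero_mul, add_zero] at e1 e2
  have goal1 : pdx (fun w =>
      ((c : ℂ) * (((ψ₁ w).re : ℝ) : ℂ) + (j : ℂ) * ψ₁ w) *
        Complex.exp (((c : ℂ) - 1) * (((ψ w).re : ℝ) : ℂ) + ((j : ℂ) + 1) * ψ w)) z =
      ((c : ℂ) * (((ψ₂).re : ℝ) : ℂ) + (j : ℂ) * ψ₂) *
        Complex.exp (((c : ℂ) - 1) * (((ψ z).re : ℝ) : ℂ) + ((j : ℂ) + 1) * ψ z) +
      ((c : ℂ) * (((ψ₁ z).re : ℝ) : ℂ) + (j : ℂ) * ψ₁ z) *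
        (Complex.exp (((c : ℂ) - 1) * (((ψ z).re : ℝ) : ℂ) + ((j : ℂ) + 1) * ψ z) *
          (((c : ℂ) - 1) * (((ψ₁ z).re : ℝ) : ℂ) + ((j : ℂ) + 1) * ψ₁ z)) := e1
  have goal2 : pdy (fun w =>
      ((c : ℂ) * ((((Complex.I * ψ₁ w).re : ℝ)) : ℂ) + (j : ℂ) * (Complex.I * ψ₁ w)) *
        Complex.exp (((c : ℂ) - 1) * (((ψ w).re : ℝ) : ℂ) + ((j : ℂ) + 1) * ψ w)) z =
      ((c : ℂ) * ((((Complex.I * (Complex.I * ψ₂)).re : ℝ)) : ℂ) +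
          (j : ℂ) * (Complex.I * (Complex.I * ψ₂))) *
        Complex.exp (((c : ℂ) - 1) * (((ψ z).re : ℝ) : ℂ) + ((j : ℂ) + 1) * ψ z) +
      ((c : ℂ) * ((((Complex.I * ψ₁ z).re : ℝ)) : ℂ) + (j : ℂ) * (Complex.I * ψ₁ z)) *
        (Complex.exp (((c : ℂ) - 1) * (((ψ z).re : ℝ) : ℂ) + ((j : ℂ) + 1) * ψ z) *
          (((c : ℂ) - 1) * ((((Complex.I * ψ₁ z).re : ℝ)) : ℂ) +
            ((j : ℂ) + 1) * (Complex.I * ψ₁ z))) := e2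
  rw [goal1, goal2]
  -- final algebraic identity
  have hsq : (c + (j : ℝ)) ^ 2 = (j : ℝ) ^ 2 + j := by
    have hcj : c + (j : ℝ) = Real.sqrt ((j : ℝ) ^ 2 + j) := by rw [hc]; ring
    rw [hcj, Real.sq_sqrt (by positivity)]
  set x : ℂ := ψ₁ z
  have hx : x = ((x.re : ℝ) : ℂ) + ((x.im : ℝ) : ℂ) * Complex.I := (Complex.re_add_im x).symm
  have hy : ψ₂ = ((ψ₂.re : ℝ) : ℂ) + ((ψ₂.im : ℝ) : ℂ) * Complex.I := (Complex.re_add_im ψ₂).symm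
  set α : ℝ := x.re
  set β : ℝ := x.im
  set γ : ℝ := ψ₂.re
  set δ : ℝ := ψ₂.im
  set E : ℂ := Complex.exp (((c : ℂ) - 1) * (((ψ z).re : ℝ) : ℂ) + ((j : ℂ) + 1) * ψ z)
  have key : ((c : ℂ) * ((γ : ℝ) : ℂ) + (j : ℂ) * ψ₂) +
      ((c : ℂ) * ((((Complex.I * (Complex.I * ψ₂)).re : ℝ)) : ℂ) +
        (j : ℂ) * (Complex.I * (Complex.I * ψ₂))) +
      (((c : ℂ) * ((α : ℝ) : ℂ) + (j : ℂ) * x) *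
        (((c : ℂ) - 1) * ((α : ℝ) : ℂ) + ((j : ℂ) + 1) * x)) +
      (((c : ℂ) * ((((Complex.I * x).re : ℝ)) : ℂ) + (j : ℂ) * (Complex.I * x)) *
        (((c : ℂ) - 1) * ((((Complex.I * x).re : ℝ)) : ℂ) + ((j : ℂ) + 1) * (Complex.I * x))) = 0 := by
    rw [hx, hy]
    rw [Complex.ext_iff]
    constructor
    · simp only [Complex.add_re, Complex.add_im, Complex.mul_re, Complex.mul_im,
        Complex.ofReal_re, Complex.ofReal_im, Complex.I_re, Complex.I_im,
        Complex.natCast_re, Complex.natCast_im, Complex.sub_re, Complex.sub_im,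
        Complex.one_re, Complex.one_im, Complex.zero_re, Complex.zero_im]
      linear_combination (α^2 + β^2) * hsq
    · simp only [Complex.add_re, Complex.add_im, Complex.mul_re, Complex.mul_im,
        Complex.ofReal_re, Complex.ofReal_im, Complex.I_re, Complex.I_im,
        Complex.natCast_re, Complex.natCast_im, Complex.sub_re, Complex.sub_im,
        Complex.one_re, Complex.one_im, Complex.zero_re, Complex.zero_im]
      ring
  linear_combination E * key
end

section
/- For relatively prime positive integers p,q, the Schoen–Wolfson cone parametrization Φ_{p,q}(re^{iθ}) = (r^{√(pq)}/√(p+q)) (√q e^{ipθ}, i√p e^{-iqθ}) is weakly conformal and Lagrangian on the unit disc, and belongs to C^{⌊√(pq)⌋, √(pq)-⌊√(pq)⌋} when √(pq) is not an integer. -/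
open Complex Real

/-- The Schoen–Wolfson cone parametrization
`Φ_{p,q}(re^{iθ}) = (r^{√(pq)}/√(p+q)) (√q e^{ipθ}, i√p e^{-iqθ})`. -/
noncomputable def SWcone (p q : ℕ) (z : ℂ) : ℂ × ℂ :=
  if z = 0 then 0 else
    ((‖z‖ ^ Real.sqrt ((p : ℝ) * q) / Real.sqrt ((p : ℝ) + q) : ℝ) : ℂ) •
      (((Real.sqrt q : ℝ) : ℂ) * (z / ((‖z‖ : ℝ) : ℂ)) ^ p,
        Complex.I * ((Real.sqrt p : ℝ) : ℂ) * ((starRingEnd ℂ) (z / ((‖z‖ : ℝ) : ℂ))) ^ q)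

set_option linter.unusedSectionVars false
noncomputable section
namespace SWaux

/-- scalar building block `‖z‖^c z^a z̄^b`. -/
def S (c : ℝ) (a b : ℕ) (z : ℂ) : ℂ :=
  ((‖z‖ ^ c : ℝ) : ℂ) * z ^ a * ((starRingEnd ℂ) z) ^ b

set_option synthInstance.maxHeartbeats 1000000
set_option maxHeartbeats 1000000

variable {E : Type*} [NormedAddCommGroup E] [NormedSpace ℝ E] [NormedSpace ℂ E]
  [IsScalarTower ℝ ℂ E] [SMulCommClass ℝ ℂ E]

set_option synthInstance.maxHeartbeats 1000000

def idS (w : E) : ℂ →L[ℝ] E := (ContinuousLinearMap.id ℝ ℂ).smulRight w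
def cjS (w : E) : ℂ →L[ℝ] E := (Complex.conjCLE.toContinuousLinearMap).smulRight w

@[simp] lemma idS_apply (w : E) (v : ℂ) : idS w v = v • w := rfl
@[simp] lemma cjS_apply (w : E) (v : ℂ) : cjS w v = (starRingEnd ℂ) v • w := rfl

def Sd1 (c : ℝ) (a b : ℕ) (z : ℂ) : ℂ :=
  ((c/2 : ℝ) : ℂ) * S (c-2) a (b+1) z + (a : ℂ) * S c (a-1) b z
def Sd2 (c : ℝ) (a b : ℕ) (z : ℂ) : ℂ :=
  ((c/2 : ℝ) : ℂ) * S (c-2) (a+1) b z + (b : ℂ) * S c a (b-1) z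

lemma norm_rpow_eq (z : ℂ) (x : ℝ) : ‖z‖ ^ x = Complex.normSq z ^ (x/2) := by
  have h0 : (0:ℝ) ≤ Complex.normSq z := Complex.normSq_nonneg z
  rw [Complex.norm_def, Real.sqrt_eq_rpow, ← Real.rpow_mul h0]
  congr 1
  ring

lemma key_re (z v : ℂ) :
    ((2*z.re*v.re + 2*z.im*v.im : ℝ) : ℂ) = (starRingEnd ℂ) z * v + z * (starRingEnd ℂ) v := by
  apply Complex.ext <;> simp <;> ring

lemma hasFDerivAt_S {z : ℂ} (hz : z ≠ 0) (c : ℝ) (a b : ℕ) :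
    HasFDerivAt (S c a b) (Sd1 c a b z • idS (1:ℂ) + Sd2 c a b z • cjS (1:ℂ)) z := by
  set t := Complex.normSq z with ht_def
  have ht : 0 < t := Complex.normSq_pos.mpr hz
  -- derivative of normSq
  have h₁ : HasFDerivAt Complex.normSq
      ((z.re • Complex.reCLM + z.re • Complex.reCLM) +
        (z.im • Complex.imCLM + z.im • Complex.imCLM)) z := by
    have hre : HasFDerivAt (fun w : ℂ => w.re * w.re)
        (z.re • Complex.reCLM + z.re • Complex.reCLM) z :=
      Complex.reCLM.hasFDerivAt.mul Complex.reCLM.hasFDerivAt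
    have him : HasFDerivAt (fun w : ℂ => w.im * w.im)
        (z.im • Complex.imCLM + z.im • Complex.imCLM) z :=
      Complex.imCLM.hasFDerivAt.mul Complex.imCLM.hasFDerivAt
    have := hre.add him
    exact this.congr_of_eventuallyEq (Filter.Eventually.of_forall fun w => by simp [Complex.normSq_apply])
  have h₂ : HasDerivAt (fun u : ℝ => u ^ (c/2)) ((c/2) * t ^ (c/2 - 1)) t :=
    Real.hasDerivAt_rpow_const (Or.inl ht.ne')
  have h₃ := h₂.comp_hasFDerivAt z h₁
  have h₄ := Complex.ofRealCLM.hasFDerivAt.comp z h₃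
  have h₅ : HasFDerivAt (fun w : ℂ => w ^ a)
      (((ContinuousLinearMap.smulRight (1 : ℂ →L[ℂ] ℂ) ((a:ℂ) * z ^ (a-1)))).restrictScalars ℝ) z :=
    ((hasDerivAt_pow a z).hasFDerivAt).restrictScalars ℝ
  have h₆ : HasFDerivAt (fun w : ℂ => ((starRingEnd ℂ) w) ^ b)
      ((((ContinuousLinearMap.smulRight (1 : ℂ →L[ℂ] ℂ)
          ((b:ℂ) * ((starRingEnd ℂ) z) ^ (b-1)))).restrictScalars ℝ).comp
        Complex.conjCLE.toContinuousLinearMap) z := by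
    have hout := ((hasDerivAt_pow b ((starRingEnd ℂ) z)).hasFDerivAt).restrictScalars ℝ
    have hconj : HasFDerivAt (fun w : ℂ => (starRingEnd ℂ) w)
        Complex.conjCLE.toContinuousLinearMap z :=
      Complex.conjCLE.toContinuousLinearMap.hasFDerivAt
    have := hout.comp z hconj
    convert this using 1 <;> ext v <;> simp
  have hS_eq : S c a b = fun w => ((Complex.normSq w ^ (c/2) : ℝ) : ℂ) * w ^ a
      * ((starRingEnd ℂ) w) ^ b := by
    funext w
    rw [S, norm_rpow_eq]
  rw [hS_eq]
  have htot := (h₄.mul h₅).mul h₆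
  refine htot.congr_fderiv ?_
  ext v
  simp only [ContinuousLinearMap.add_apply, ContinuousLinearMap.smul_apply, idS_apply, cjS_apply,
    Pi.mul_apply, ContinuousLinearMap.coe_comp', Function.comp_apply, ContinuousLinearMap.coe_restrictScalars',
    ContinuousLinearMap.smulRight_apply, ContinuousLinearMap.one_apply,
    ContinuousLinearMap.coe_smul', Pi.smul_apply, Complex.ofRealCLM_apply,
    ContinuousLinearMap.coe_coe, ContinuousLinearEquiv.coe_coe, Complex.conjCLE_apply,
    Complex.reCLM_apply, Complex.imCLM_apply, Sd1, Sd2, S, smul_eq_mul]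
  rw [norm_rpow_eq z (c-2), norm_rpow_eq z c]
  have he : (c-2)/2 = c/2 - 1 := by ring
  rw [he, ← ht_def]
  rw [show (c / 2 * t ^ (c / 2 - 1) * (z.re * v.re + z.re * v.re + (z.im * v.im + z.im * v.im)) : ℝ)
      = (t ^ (c/2-1) * (c/2)) * (2*z.re*v.re + 2*z.im*v.im) from by ring]
  rw [Complex.ofReal_mul, key_re z v]
  rw [pow_succ ((starRingEnd ℂ) z) b, pow_succ z a]
  push_cast
  ring



@[simp] lemma idS_zero : idS (0 : E) = 0 := by ext v; simp
@[simp] lemma cjS_zero : cjS (0 : E) = 0 := by ext v; simp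

lemma hasFDerivAt_S_smul (w : E) {z : ℂ} (hz : z ≠ 0) (c : ℝ) (a b : ℕ) :
    HasFDerivAt (fun z => S c a b z • w)
      (Sd1 c a b z • idS w + Sd2 c a b z • cjS w) z := by
  refine ((hasFDerivAt_S hz c a b).smul_const w).congr_fderiv ?_
  ext v
  simp [smul_smul, add_smul, mul_comm]

def IsHomog {E : Type*} [NormedAddCommGroup E] [NormedSpace ℝ E] [NormedSpace ℂ E]
    [IsScalarTower ℝ ℂ E] [SMulCommClass ℝ ℂ E] (d : ℝ) (g : ℂ → E) : Prop :=
  ∃ (ι : Type) (_ : Fintype ι) (c : ι → ℝ) (a b : ι → ℕ) (w : ι → E),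
    (∀ i, c i + a i + b i = d ∨ w i = 0) ∧ g 0 = 0 ∧
      ∀ z, z ≠ 0 → g z = ∑ i, S (c i) (a i) (b i) z • w i

lemma norm_S {z : ℂ} (hz : z ≠ 0) (c : ℝ) (a b : ℕ) :
    ‖S c a b z‖ = ‖z‖ ^ (c + a + b) := by
  have h0 : (0:ℝ) < ‖z‖ := norm_pos_iff.mpr hz
  have : ‖z‖ ^ (c + a + b) = ‖z‖ ^ c * ‖z‖ ^ (a:ℕ) * ‖z‖ ^ (b:ℕ) := by
    rw [Real.rpow_add h0, Real.rpow_add h0, Real.rpow_natCast, Real.rpow_natCast]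
  rw [this, S]
  simp only [norm_mul, norm_pow, Complex.norm_real, RCLike.norm_conj,
    Real.norm_eq_abs, Real.abs_rpow_of_nonneg (norm_nonneg z), abs_of_pos h0]

lemma IsHomog.zero_val {d : ℝ} {g : ℂ → E} (h : IsHomog d g) : g 0 = 0 := by
  obtain ⟨_, _, _, _, _, _, _, h0, _⟩ := h; exact h0

lemma IsHomog.exists_bound {d : ℝ} {g : ℂ → E} (h : IsHomog d g) :
    ∃ C : ℝ, 0 ≤ C ∧ ∀ z, z ≠ 0 → ‖g z‖ ≤ C * ‖z‖ ^ d := by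
  obtain ⟨ι, _, c, a, b, w, hsum, h0, hg⟩ := h
  refine ⟨∑ i, ‖w i‖, by positivity, fun z hz => ?_⟩
  rw [hg z hz, Finset.sum_mul]
  refine (norm_sum_le _ _).trans (Finset.sum_le_sum fun i _ => ?_)
  rcases hsum i with hi | hi
  · rw [norm_smul, norm_S hz, hi, mul_comm]
  · simp only [hi, smul_zero, norm_zero]
    positivity

lemma IsHomog.exists_hasFDerivAt {d : ℝ} {g : ℂ → E} (h : IsHomog d g) :
    ∃ g' : ℂ → (ℂ →L[ℝ] E), IsHomog (d-1) g' ∧ ∀ z, z ≠ 0 → HasFDerivAt g (g' z) z := by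
  classical
  obtain ⟨ι, hι, c, a, b, w, hsum, h0, hg⟩ := h
  refine ⟨fun z => if z = 0 then 0 else
      ∑ i, (Sd1 (c i) (a i) (b i) z • idS (w i) + Sd2 (c i) (a i) (b i) z • cjS (w i)),
    ?_, fun z hz => ?_⟩
  · refine ⟨(ι ⊕ ι) ⊕ (ι ⊕ ι), inferInstance,
      Sum.elim (Sum.elim (fun i => c i - 2) c) (Sum.elim (fun i => c i - 2) c),
      Sum.elim (Sum.elim a (fun i => a i - 1)) (Sum.elim (fun i => a i + 1) a),
      Sum.elim (Sum.elim (fun i => b i + 1) b) (Sum.elim b (fun i => b i - 1)),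
      Sum.elim (Sum.elim (fun i => ((c i/2 : ℝ):ℂ) • idS (w i))
          (fun i => (a i : ℂ) • idS (w i)))
        (Sum.elim (fun i => ((c i/2 : ℝ):ℂ) • cjS (w i))
          (fun i => (b i : ℂ) • cjS (w i))), ?_, by simp, ?_⟩
    · rintro ((i|i)|(i|i)) <;> rcases hsum i with hi | hi <;>
        simp only [Sum.elim_inl, Sum.elim_inr]
      · left; push_cast; linarith
      · right; simp [hi]
      · by_cases ha : a i = 0
        · right; simp [ha]
        · left
          rw [Nat.cast_sub (Nat.one_le_iff_ne_zero.mpr ha)]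
          push_cast; linarith
      · right; simp [hi]
      · left; push_cast; linarith
      · right; simp [hi]
      · by_cases hb : b i = 0
        · right; simp [hb]
        · left
          rw [Nat.cast_sub (Nat.one_le_iff_ne_zero.mpr hb)]
          push_cast; linarith
      · right; simp [hi]
    · intro z hz
      simp only [if_neg hz]
      rw [Fintype.sum_sum_type, Fintype.sum_sum_type, Fintype.sum_sum_type]
      simp only [Sum.elim_inl, Sum.elim_inr]
      rw [← Finset.sum_add_distrib, ← Finset.sum_add_distrib, ← Finset.sum_add_distrib]
      refine Finset.sum_congr rfl fun i _ => ?_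
      rw [Sd1, Sd2]
      module
  · have hev : g =ᶠ[nhds z] fun y => ∑ i, S (c i) (a i) (b i) y • w i := by
      filter_upwards [IsOpen.mem_nhds isOpen_ne hz] with y hy
      exact hg y hy
    have hder : HasFDerivAt (fun y => ∑ i, S (c i) (a i) (b i) y • w i)
        (∑ i, (Sd1 (c i) (a i) (b i) z • idS (w i) + Sd2 (c i) (a i) (b i) z • cjS (w i))) z :=
      HasFDerivAt.fun_sum fun i _ => hasFDerivAt_S_smul (w i) hz _ _ _
    simp only [if_neg hz]
    exact hder.congr_of_eventuallyEq hev

lemma IsHomog.hasFDerivAt_zero {d : ℝ} {g : ℂ → E} (h : IsHomog d g) (hd : 1 < d) :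
    HasFDerivAt g (0 : ℂ →L[ℝ] E) 0 := by
  obtain ⟨C, hC, hb⟩ := h.exists_bound
  rw [hasFDerivAt_iff_isLittleO_nhds_zero]
  rw [Asymptotics.isLittleO_iff]
  intro ε hε
  have hlim : Filter.Tendsto (fun v : ℂ => C * ‖v‖ ^ (d-1)) (nhds 0) (nhds 0) := by
    have h1 : Filter.Tendsto (fun v : ℂ => ‖v‖) (nhds 0) (nhds 0) := by
      simpa using (continuous_norm (E := ℂ)).tendsto 0
    have h2 : Filter.Tendsto (fun t : ℝ => C * t ^ (d-1)) (nhds 0) (nhds (C * 0 ^ (d-1))) := by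
      exact (((Real.continuousAt_rpow_const 0 (d-1) (Or.inr (by linarith))).const_smul C)).tendsto
    rw [Real.zero_rpow (by linarith), mul_zero] at h2
    exact h2.comp h1
  filter_upwards [hlim.eventually (ge_mem_nhds hε)] with v hv
  by_cases hv0 : v = 0
  · simp [hv0, h.zero_val]
  · have h1 : g (0 + v) - g 0 - (0 : ℂ →L[ℝ] E) v = g v := by simp [h.zero_val]
    rw [h1]
    calc ‖g v‖ ≤ C * ‖v‖ ^ d := hb v hv0
    _ = (C * ‖v‖ ^ (d-1)) * ‖v‖ := by
        rw [mul_assoc, ← Real.rpow_add_one (norm_ne_zero_iff.mpr hv0)]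
        ring_nf
    _ ≤ ε * ‖v‖ := by
        have := norm_nonneg v
        exact mul_le_mul_of_nonneg_right hv this

lemma IsHomog.differentiable_fderiv {d : ℝ} {g : ℂ → E} (h : IsHomog d g) (hd : 1 < d) :
    Differentiable ℝ g ∧ IsHomog (d-1) (fderiv ℝ g) := by
  obtain ⟨g', hg', hder⟩ := h.exists_hasFDerivAt
  have hdiff : Differentiable ℝ g := by
    intro z
    by_cases hz : z = 0
    · exact hz ▸ (h.hasFDerivAt_zero hd).differentiableAt
    · exact (hder z hz).differentiableAt
  refine ⟨hdiff, ?_⟩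
  have heq : fderiv ℝ g = g' := by
    funext z
    by_cases hz : z = 0
    · rw [hz, (h.hasFDerivAt_zero hd).fderiv, hg'.zero_val]
    · exact (hder z hz).fderiv
  rwa [heq]

lemma IsHomog.continuous {d : ℝ} {g : ℂ → E} (h : IsHomog d g) (hd : 0 < d) :
    Continuous g := by
  rw [continuous_iff_continuousAt]
  intro z
  by_cases hz : z = 0
  · obtain ⟨C, hC, hb⟩ := h.exists_bound
    rw [ContinuousAt, hz, h.zero_val]
    apply squeeze_zero_norm (a := fun v : ℂ => C * ‖v‖ ^ d)
    · intro v
      by_cases hv : v = 0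
      · simp [hv, h.zero_val]
        positivity
      · exact hb v hv
    · have h1 : Filter.Tendsto (fun v : ℂ => ‖v‖) (nhds 0) (nhds 0) := by
        simpa using (continuous_norm (E := ℂ)).tendsto 0
      have h2 : Filter.Tendsto (fun t : ℝ => C * t ^ d) (nhds 0) (nhds (C * 0 ^ d)) :=
        (((Real.continuousAt_rpow_const 0 d (Or.inr hd.le)).const_smul C)).tendsto
      rw [Real.zero_rpow hd.ne', mul_zero] at h2
      exact h2.comp h1
  · obtain ⟨ι, hι, c, a, b, w, hsum, h0, hg⟩ := h
    have hS : ∀ i : ι, ContinuousAt (fun y => S (c i) (a i) (b i) y • w i) z := by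
      intro i
      have h1 : ContinuousAt (fun y : ℂ => (‖y‖ ^ (c i) : ℝ)) z :=
        continuous_norm.continuousAt.rpow_const (Or.inl (norm_ne_zero_iff.mpr hz))
      have h2 : ContinuousAt (fun y : ℂ => ((‖y‖ ^ (c i) : ℝ) : ℂ)) z :=
        Complex.continuous_ofReal.continuousAt.comp h1
      have h3 : ContinuousAt (fun y : ℂ => S (c i) (a i) (b i) y) z := by
        unfold S
        exact (h2.mul ((continuous_pow (a i)).continuousAt)).mul
          (((continuous_pow (b i)).comp Complex.continuous_conj).continuousAt)
      exact h3.smul continuousAt_const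
    have hsum' : ContinuousAt (fun y => ∑ i, S (c i) (a i) (b i) y • w i) z :=
      tendsto_finset_sum _ fun i _ => hS i
    refine hsum'.congr ?_
    filter_upwards [IsOpen.mem_nhds isOpen_ne hz] with y hy
    exact (hg y hy).symm

lemma IsHomog.comp_linear {F : Type*} [NormedAddCommGroup F] [NormedSpace ℝ F] [NormedSpace ℂ F]
    [IsScalarTower ℝ ℂ F] [SMulCommClass ℝ ℂ F] {d : ℝ} {g : ℂ → E} (h : IsHomog d g)
    (T : E → F) (hadd : ∀ x y, T (x + y) = T x + T y)
    (hsmul : ∀ (m : ℂ) (x : E), T (m • x) = m • T x) :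
    IsHomog d (fun z => T (g z)) := by
  obtain ⟨ι, hι, c, a, b, w, hsum, h0, hg⟩ := h
  let L : E →ₗ[ℂ] F := { toFun := T, map_add' := hadd, map_smul' := hsmul }
  refine ⟨ι, hι, c, a, b, fun i => T (w i), ?_, by show T (g 0) = 0; rw [h0]; exact map_zero L, fun z hz => ?_⟩
  · intro i
    rcases hsum i with hi | hi
    · exact Or.inl hi
    · right
      show T (w i) = 0
      rw [hi]
      exact map_zero L
  · show T (g z) = _
    rw [hg z hz]
    rw [show T (∑ i, S (c i) (a i) (b i) z • w i) = L (∑ i, S (c i) (a i) (b i) z • w i) from rfl,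
      map_sum]
    refine Finset.sum_congr rfl fun i _ => ?_
    exact map_smul L _ _

lemma isHomog_contDiff : ∀ (k : ℕ) {E : Type*} [NormedAddCommGroup E] [NormedSpace ℝ E]
    [NormedSpace ℂ E] [IsScalarTower ℝ ℂ E] [SMulCommClass ℝ ℂ E]
    {d : ℝ} {g : ℂ → E}, IsHomog d g → (k : ℝ) < d → ContDiff ℝ (k : ℕ) g := by
  intro k
  induction k with
  | zero =>
    intro E _ _ _ _ _ d g h hd
    exact contDiff_zero.mpr (h.continuous (by exact_mod_cast hd))
  | succ n ih =>
    intro E _ _ _ _ _ d g h hd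
    have hn1 : ((n:ℝ)) + 1 ≤ d := by push_cast at hd ⊢; linarith
    have hd1 : (1:ℝ) < d := by
      have : (0:ℝ) ≤ n := Nat.cast_nonneg n
      push_cast at hd; linarith
    obtain ⟨hdiff, hfd⟩ := h.differentiable_fderiv hd1
    have hcast : ((n+1 : ℕ) : WithTop ℕ∞) = ((n:ℕ) : WithTop ℕ∞) + 1 := by push_cast; rfl
    rw [hcast]
    refine contDiff_succ_iff_fderiv.mpr ⟨hdiff, by simp, ?_⟩
    exact ih hfd (by push_cast at hd ⊢; linarith)

lemma isHomog_iteratedFDeriv : ∀ (k : ℕ) {d : ℝ} {g : ℂ → E}, IsHomog d g → (k:ℝ) < d →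
    IsHomog (d - k) (iteratedFDeriv ℝ k g) := by
  intro k
  induction k with
  | zero =>
    intro d g h _
    rw [iteratedFDeriv_zero_eq_comp]
    have := h.comp_linear (⇑(continuousMultilinearCurryFin0 ℝ ℂ E).symm)
      (fun x y => map_add (continuousMultilinearCurryFin0 ℝ ℂ E).symm x y) (fun m x => by ext v; simp)
    rw [Nat.cast_zero, sub_zero]
    exact this
  | succ n ih =>
    intro d g h hd
    have hdn : (n:ℝ) < d := by push_cast at hd ⊢; linarith
    have h1 : (1:ℝ) < d - n := by push_cast at hd; linarith
    have hIH := ih h hdn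
    obtain ⟨_, hfd⟩ := hIH.differentiable_fderiv h1
    rw [iteratedFDeriv_succ_eq_comp_left]
    have := hfd.comp_linear
      (⇑(continuousMultilinearCurryLeftEquiv ℝ (fun _ : Fin (n+1) => ℂ) E).symm)
      (fun x y => by simp) (fun m x => by ext v; simp)
    have hexp : d - (n:ℝ) - 1 = d - ((n+1 : ℕ) : ℝ) := by push_cast; ring
    rw [hexp] at this
    exact this

lemma isHomog_holder {d : ℝ} {g : ℂ → E} (h : IsHomog d g) (h0 : 0 < d) (h1 : d < 1) :
    ∃ C : NNReal, HolderWith C d.toNNReal g := by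
  obtain ⟨g', hg', hder⟩ := h.exists_hasFDerivAt
  obtain ⟨C₁, hC₁, hb₁⟩ := h.exists_bound
  obtain ⟨C₂, hC₂, hb₂⟩ := hg'.exists_bound
  set C : ℝ := 4*C₁ + 2*C₂ with hCdef
  have hC : 0 ≤ C := by positivity
  have main : ∀ z w : ℂ, ‖w‖ ≤ ‖z‖ → ‖g z - g w‖ ≤ C * ‖z - w‖ ^ d := by
    intro z w hzw
    by_cases hz0 : z = 0
    · have hw0 : w = 0 := by
        rw [← norm_le_zero_iff]
        simpa [hz0] using hzw
      rw [hz0, hw0, h.zero_val, sub_self, norm_zero]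
      positivity
    have hz : 0 < ‖z‖ := norm_pos_iff.mpr hz0
    by_cases hzw0 : z = w
    · rw [hzw0, sub_self, sub_self, norm_zero, norm_zero]
      rw [Real.zero_rpow h0.ne']
      simp
    have hd0 : 0 < ‖z - w‖ := by
      rw [norm_pos_iff, sub_ne_zero]
      exact hzw0
    by_cases hnear : ‖z - w‖ ≤ ‖z‖/2
    · set s : Set ℂ := Metric.closedBall z (‖z‖/2) with hsdef
      have hsub : ∀ u ∈ s, ‖z‖/2 ≤ ‖u‖ ∧ u ≠ 0 := by
        intro u hu
        have hd1 : dist u z ≤ ‖z‖/2 := Metric.mem_closedBall.mp hu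
        rw [dist_eq_norm] at hd1
        have h2 : ‖z‖ - ‖u‖ ≤ ‖z - u‖ := norm_sub_norm_le z u
        rw [norm_sub_rev] at h2
        constructor
        · linarith
        · rw [← norm_pos_iff]
          linarith
      have hbound : ∀ u ∈ s, ‖g' u‖ ≤ C₂ * (‖z‖/2) ^ (d-1) := by
        intro u hu
        obtain ⟨hge, hu0⟩ := hsub u hu
        refine (hb₂ u hu0).trans ?_
        refine mul_le_mul_of_nonneg_left ?_ hC₂
        exact Real.rpow_le_rpow_of_nonpos (by positivity) hge (by linarith)
      have hws : w ∈ s := by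
        rw [hsdef, Metric.mem_closedBall, dist_eq_norm, norm_sub_rev]
        exact hnear
      have hzs : z ∈ s := Metric.mem_closedBall_self (by positivity)
      have hmvt := Convex.norm_image_sub_le_of_norm_hasFDerivWithin_le
        (fun u hu => (hder u (hsub u hu).2).hasFDerivWithinAt)
        hbound (convex_closedBall _ _) hzs hws
      rw [norm_sub_rev]
      refine hmvt.trans ?_
      rw [norm_sub_rev w z]
      have hr1 : (‖z‖/2) ^ (d-1) ≤ ‖z - w‖ ^ (d-1) :=
        Real.rpow_le_rpow_of_nonpos hd0 hnear (by linarith)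
      calc C₂ * (‖z‖/2) ^ (d-1) * ‖z - w‖
          ≤ C₂ * ‖z - w‖ ^ (d-1) * ‖z - w‖ := by
            have := mul_le_mul_of_nonneg_left hr1 hC₂
            exact mul_le_mul_of_nonneg_right this hd0.le
        _ = C₂ * ‖z - w‖ ^ d := by
            rw [mul_assoc, ← Real.rpow_add_one hd0.ne']
            ring_nf
        _ ≤ C * ‖z - w‖ ^ d := by
            have : (0:ℝ) ≤ ‖z - w‖ ^ d := by positivity
            nlinarith
    · push_neg at hnear
      have h2 : ‖z‖ ≤ 2 * ‖z - w‖ := by linarith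
      have hgw : ‖g w‖ ≤ C₁ * ‖z‖ ^ d := by
        by_cases hw0 : w = 0
        · rw [hw0, h.zero_val, norm_zero]
          positivity
        · refine (hb₁ w hw0).trans ?_
          exact mul_le_mul_of_nonneg_left
            (Real.rpow_le_rpow (norm_nonneg w) hzw h0.le) hC₁
      have hgz : ‖g z‖ ≤ C₁ * ‖z‖ ^ d := hb₁ z hz0
      have hstep : ‖z‖ ^ d ≤ 2 * ‖z - w‖ ^ d := by
        calc ‖z‖ ^ d ≤ (2 * ‖z - w‖) ^ d :=
              Real.rpow_le_rpow (norm_nonneg z) h2 h0.le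
          _ = 2 ^ d * ‖z - w‖ ^ d := Real.mul_rpow (by norm_num) (norm_nonneg _)
          _ ≤ 2 * ‖z - w‖ ^ d := by
              have h21 : (2:ℝ) ^ d ≤ 2 ^ (1:ℝ) :=
                Real.rpow_le_rpow_of_exponent_le one_le_two h1.le
              rw [Real.rpow_one] at h21
              have : (0:ℝ) ≤ ‖z - w‖ ^ d := by positivity
              nlinarith
      calc ‖g z - g w‖ ≤ ‖g z‖ + ‖g w‖ := norm_sub_le _ _
        _ ≤ C₁ * ‖z‖ ^ d + C₁ * ‖z‖ ^ d := add_le_add hgz hgw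
        _ = 2 * C₁ * ‖z‖ ^ d := by ring
        _ ≤ 2 * C₁ * (2 * ‖z - w‖ ^ d) := by
            refine mul_le_mul_of_nonneg_left hstep (by positivity)
        _ ≤ C * ‖z - w‖ ^ d := by
            have : (0:ℝ) ≤ ‖z - w‖ ^ d := by positivity
            nlinarith
  refine ⟨⟨C, hC⟩, fun z w => ?_⟩
  have hdist : dist (g z) (g w) ≤ C * dist z w ^ d := by
    rcases le_total ‖w‖ ‖z‖ with hc | hc
    · rw [dist_eq_norm, dist_eq_norm]
      exact main z w hc
    · rw [dist_comm, dist_comm z w, dist_eq_norm, dist_eq_norm]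
      exact main w z hc
  rw [edist_dist, edist_dist]
  calc ENNReal.ofReal (dist (g z) (g w)) ≤ ENNReal.ofReal (C * dist z w ^ d) :=
        ENNReal.ofReal_le_ofReal hdist
    _ = ENNReal.ofReal C * ENNReal.ofReal (dist z w ^ d) := ENNReal.ofReal_mul hC
    _ = ENNReal.ofReal C * ENNReal.ofReal (dist z w) ^ ((d.toNNReal : ℝ)) := by
        rw [Real.coe_toNNReal d h0.le, ENNReal.ofReal_rpow_of_nonneg dist_nonneg h0.le]
    _ = (ENNReal.ofNNReal ⟨C, hC⟩) * ENNReal.ofReal (dist z w) ^ ((d.toNNReal : ℝ)) := by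
        congr 1
        rw [ENNReal.ofReal]
        congr 1
        exact Real.toNNReal_of_nonneg hC

lemma pdx_eq {F : Type*} [NormedAddCommGroup F] [NormedSpace ℝ F]
    {f : ℂ → F} {L : ℂ →L[ℝ] F} {z : ℂ} (h : HasFDerivAt f L z) :
    pdx f z = L 1 := by
  have hg : HasDerivAt (fun t : ℝ => z + (t : ℂ)) 1 0 := by
    have h1 : HasDerivAt (fun t : ℝ => (t : ℂ)) ((Complex.ofRealCLM : ℝ →L[ℝ] ℂ) 1) 0 :=
      Complex.ofRealCLM.hasFDerivAt.hasDerivAt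
    simpa using h1.const_add z
  have h2 := HasFDerivAt.comp_hasDerivAt 0 (by simpa using h) hg
  rw [pdx]
  exact h2.deriv

lemma pdy_eq {F : Type*} [NormedAddCommGroup F] [NormedSpace ℝ F]
    {f : ℂ → F} {L : ℂ →L[ℝ] F} {z : ℂ} (h : HasFDerivAt f L z) :
    pdy f z = L Complex.I := by
  have hg : HasDerivAt (fun t : ℝ => z + (t : ℂ) * Complex.I) Complex.I 0 := by
    have h1 : HasDerivAt (fun t : ℝ => (t : ℂ)) ((Complex.ofRealCLM : ℝ →L[ℝ] ℂ) 1) 0 :=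
      Complex.ofRealCLM.hasFDerivAt.hasDerivAt
    have h2 := (h1.mul_const Complex.I).const_add z
    simpa using h2
  have h2 := HasFDerivAt.comp_hasDerivAt 0 (by simpa using h) hg
  rw [pdy]
  exact h2.deriv

lemma SWcone_rep (p q : ℕ) {z : ℂ} (hz : z ≠ 0) :
    SWcone p q z
      = S (Real.sqrt ((p:ℝ)*q) - p) p 0 z
          • (((Real.sqrt q / Real.sqrt ((p:ℝ)+q) : ℝ) : ℂ), (0:ℂ))
        + S (Real.sqrt ((p:ℝ)*q) - q) 0 q z
          • ((0:ℂ), Complex.I * ((Real.sqrt p / Real.sqrt ((p:ℝ)+q) : ℝ) : ℂ)) := by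
  rw [SWcone, if_neg hz]
  have hR : (0:ℝ) < ‖z‖ := norm_pos_iff.mpr hz
  have hRC : ((‖z‖ : ℝ) : ℂ) ≠ 0 := by exact_mod_cast hR.ne'
  have hsq : (0:ℝ) < Real.sqrt ((p:ℝ)+q) ∨ True := Or.inr trivial
  have h1 : ‖z‖ ^ (Real.sqrt ((p:ℝ)*q) - p) = ‖z‖ ^ Real.sqrt ((p:ℝ)*q) / ‖z‖ ^ (p:ℕ) := by
    rw [Real.rpow_sub hR, Real.rpow_natCast]
  have h2 : ‖z‖ ^ (Real.sqrt ((p:ℝ)*q) - q) = ‖z‖ ^ Real.sqrt ((p:ℝ)*q) / ‖z‖ ^ (q:ℕ) := by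
    rw [Real.rpow_sub hR, Real.rpow_natCast]
  have hmc : (starRingEnd ℂ) (z / ((‖z‖ : ℝ) : ℂ)) = (starRingEnd ℂ) z / ((‖z‖ : ℝ) : ℂ) := by
    simp [map_div₀]
  apply Prod.ext
  · simp only [Prod.smul_fst, Prod.fst_add, smul_eq_mul, S, h1, pow_zero, mul_one,
      Prod.smul_snd, Prod.snd_add, mul_zero, add_zero, div_pow]
    push_cast
    field_simp
  · simp only [Prod.smul_fst, Prod.fst_add, smul_eq_mul, S, h2, pow_one,
      Prod.smul_snd, Prod.snd_add, mul_zero, zero_add, hmc, div_pow, map_pow]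
    push_cast
    field_simp

lemma SWcone_isHomog (p q : ℕ) :
    IsHomog (Real.sqrt ((p:ℝ)*q)) (SWcone p q) := by
  refine ⟨Fin 2, inferInstance,
    ![Real.sqrt ((p:ℝ)*q) - p, Real.sqrt ((p:ℝ)*q) - q],
    ![p, 0], ![0, q],
    ![(((Real.sqrt q / Real.sqrt ((p:ℝ)+q) : ℝ) : ℂ), (0:ℂ)),
      ((0:ℂ), Complex.I * ((Real.sqrt p / Real.sqrt ((p:ℝ)+q) : ℝ) : ℂ))],
    ?_, by rw [SWcone]; simp, fun z hz => ?_⟩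
  · intro i
    fin_cases i <;> left <;> simp <;> ring
  · rw [SWcone_rep p q hz, Fin.sum_univ_two]
    simp

section SdPair

variable {z : ℂ}

lemma aux_conj_sq (z : ℂ) : z * (starRingEnd ℂ) z = (((‖z‖:ℝ):ℂ))^(2:ℕ) := by
  rw [Complex.mul_conj, Complex.normSq_eq_norm_sq]
  push_cast
  ring

lemma aux_re (z : ℂ) : ((z.re:ℝ):ℂ) = (z + (starRingEnd ℂ) z)/2 := by
  rw [Complex.add_conj]
  push_cast
  ring

lemma aux_im (z : ℂ) : ((z.im:ℝ):ℂ) = ((starRingEnd ℂ) z - z) * Complex.I / 2 := by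
  have h := Complex.sub_conj z
  have hI : Complex.I * Complex.I = -1 := Complex.I_mul_I
  have h2 : (starRingEnd ℂ) z - z = -(((2 * z.im : ℝ):ℂ) * Complex.I) := by
    rw [← h]; ring
  rw [h2]
  push_cast
  field_simp
  linear_combination (z.im:ℂ) * hI

lemma aux_rpow (hz : z ≠ 0) (c : ℝ) :
    ((‖z‖ ^ c : ℝ) : ℂ) = ((‖z‖ ^ (c-2) : ℝ) : ℂ) * (((‖z‖:ℝ):ℂ))^(2:ℕ) := by
  have hR : (0:ℝ) < ‖z‖ := norm_pos_iff.mpr hz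
  rw [show c = (c-2) + 2 from by ring, Real.rpow_add hR]
  push_cast
  rw [Real.rpow_two]
  push_cast
  ring_nf

lemma Sd_sum_one (hz : z ≠ 0) (c : ℝ) (p : ℕ) (hp : 0 < p) :
    Sd1 c p 0 z + Sd2 c p 0 z
      = ((‖z‖ ^ (c-2) : ℝ) : ℂ) * z^p * ((c:ℂ) * (z.re:ℝ) + (p:ℂ) * (starRingEnd ℂ) z) := by
  have hp1 : z ^ p = z ^ (p-1) * z := by rw [← pow_succ, Nat.sub_add_cancel hp]
  have hp2 : z ^ (p+1) = z ^ (p-1) * z * z := by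
    rw [← pow_succ, ← pow_succ, Nat.sub_add_cancel hp]
  rw [Sd1, Sd2, S, S, S, S, aux_rpow hz c, aux_re, hp1, hp2]
  push_cast
  rw [show (((‖z‖:ℝ):ℂ))^(2:ℕ) = z * (starRingEnd ℂ) z from (aux_conj_sq z).symm]
  ring

lemma Sd_diff_one (hz : z ≠ 0) (c : ℝ) (p : ℕ) (hp : 0 < p) :
    (Sd1 c p 0 z - Sd2 c p 0 z) * Complex.I
      = ((‖z‖ ^ (c-2) : ℝ) : ℂ) * z^p * ((c:ℂ) * (z.im:ℝ) + (p:ℂ) * Complex.I * (starRingEnd ℂ) z) := by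
  have hp1 : z ^ p = z ^ (p-1) * z := by rw [← pow_succ, Nat.sub_add_cancel hp]
  have hp2 : z ^ (p+1) = z ^ (p-1) * z * z := by
    rw [← pow_succ, ← pow_succ, Nat.sub_add_cancel hp]
  have hI : Complex.I * Complex.I = -1 := Complex.I_mul_I
  rw [Sd1, Sd2, S, S, S, S, aux_rpow hz c, aux_im, hp1, hp2]
  push_cast
  rw [show (((‖z‖:ℝ):ℂ))^(2:ℕ) = z * (starRingEnd ℂ) z from (aux_conj_sq z).symm]
  ring

lemma Sd_sum_two (hz : z ≠ 0) (c : ℝ) (q : ℕ) (hq : 0 < q) :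
    Sd1 c 0 q z + Sd2 c 0 q z
      = ((‖z‖ ^ (c-2) : ℝ) : ℂ) * ((starRingEnd ℂ) z)^q * ((c:ℂ) * (z.re:ℝ) + (q:ℂ) * z) := by
  have hq1 : ((starRingEnd ℂ) z) ^ q = ((starRingEnd ℂ) z) ^ (q-1) * (starRingEnd ℂ) z := by
    rw [← pow_succ, Nat.sub_add_cancel hq]
  have hq2 : ((starRingEnd ℂ) z) ^ (q+1)
      = ((starRingEnd ℂ) z) ^ (q-1) * (starRingEnd ℂ) z * (starRingEnd ℂ) z := by
    rw [← pow_succ, ← pow_succ, Nat.sub_add_cancel hq]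
  rw [Sd1, Sd2, S, S, S, S, aux_rpow hz c, aux_re, hq1, hq2]
  push_cast
  rw [show (((‖z‖:ℝ):ℂ))^(2:ℕ) = z * (starRingEnd ℂ) z from (aux_conj_sq z).symm]
  ring

lemma Sd_diff_two (hz : z ≠ 0) (c : ℝ) (q : ℕ) (hq : 0 < q) :
    (Sd1 c 0 q z - Sd2 c 0 q z) * Complex.I
      = ((‖z‖ ^ (c-2) : ℝ) : ℂ) * ((starRingEnd ℂ) z)^q * ((c:ℂ) * (z.im:ℝ) - (q:ℂ) * Complex.I * z) := by
  have hq1 : ((starRingEnd ℂ) z) ^ q = ((starRingEnd ℂ) z) ^ (q-1) * (starRingEnd ℂ) z := by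
    rw [← pow_succ, Nat.sub_add_cancel hq]
  have hq2 : ((starRingEnd ℂ) z) ^ (q+1)
      = ((starRingEnd ℂ) z) ^ (q-1) * (starRingEnd ℂ) z * (starRingEnd ℂ) z := by
    rw [← pow_succ, ← pow_succ, Nat.sub_add_cancel hq]
  have hI : Complex.I * Complex.I = -1 := Complex.I_mul_I
  rw [Sd1, Sd2, S, S, S, S, aux_rpow hz c, aux_im, hq1, hq2]
  push_cast
  rw [show (((‖z‖:ℝ):ℂ))^(2:ℕ) = z * (starRingEnd ℂ) z from (aux_conj_sq z).symm]
  ring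

end SdPair

end SWaux

set_option maxHeartbeats 2000000 in
/-- For coprime positive integers `p, q`, the Schoen–Wolfson cone parametrization
`Φ_{p,q}` is weakly conformal and Lagrangian on the unit disc, and belongs to
`C^{⌊√(pq)⌋, √(pq) - ⌊√(pq)⌋}` when `√(pq)` is not an integer. -/
theorem SWcone_conformal_lagrangian_Holder (p q : ℕ) (hp : 0 < p) (hq : 0 < q)
    (hco : Nat.Coprime p q) :
    (∀ z : ℂ, z ≠ 0 → ‖z‖ < 1 →
      ((pdx (SWcone p q) z).1 * (starRingEnd ℂ) (pdy (SWcone p q) z).1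
          + (pdx (SWcone p q) z).2 * (starRingEnd ℂ) (pdy (SWcone p q) z).2).re = 0 ∧
      ‖(pdx (SWcone p q) z).1‖ ^ 2 + ‖(pdx (SWcone p q) z).2‖ ^ 2
          = ‖(pdy (SWcone p q) z).1‖ ^ 2 + ‖(pdy (SWcone p q) z).2‖ ^ 2 ∧
      ((pdx (SWcone p q) z).1 * (starRingEnd ℂ) (Complex.I * (pdy (SWcone p q) z).1)
          + (pdx (SWcone p q) z).2 *
              (starRingEnd ℂ) (Complex.I * (pdy (SWcone p q) z).2)).re = 0) ∧
    ((¬∃ m : ℕ, p * q = m ^ 2) →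
      ContDiff ℝ ((⌊Real.sqrt ((p : ℝ) * q)⌋₊ : ℕ) : ℕ∞) (SWcone p q) ∧
      ∃ C : NNReal,
        HolderWith C (Real.sqrt ((p : ℝ) * q) - ⌊Real.sqrt ((p : ℝ) * q)⌋₊).toNNReal
          (iteratedFDeriv ℝ ⌊Real.sqrt ((p : ℝ) * q)⌋₊ (SWcone p q))) := by
  have hp' : (0:ℝ) < p := by exact_mod_cast hp
  have hq' : (0:ℝ) < q := by exact_mod_cast hq
  have hpq' : (0:ℝ) < (p:ℝ)*q := by positivity
  have hpq2 : (0:ℝ) < (p:ℝ)+q := by positivity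
  have hs2 : Real.sqrt ((p:ℝ)*q) ^ 2 = (p:ℝ)*q := Real.sq_sqrt hpq'.le
  constructor
  · -- pointwise conformal/Lagrangian identities
    intro z hz _
    have hR : (0:ℝ) < ‖z‖ := norm_pos_iff.mpr hz
    set s : ℝ := Real.sqrt ((p:ℝ)*q) with hsdef
    set ka : ℝ := Real.sqrt q / Real.sqrt ((p:ℝ)+q) with hkadef
    set kb : ℝ := Real.sqrt p / Real.sqrt ((p:ℝ)+q) with hkbdef
    set w₁ : ℂ × ℂ := (((ka:ℝ):ℂ), 0) with hw1
    set w₂ : ℂ × ℂ := (0, Complex.I * ((kb:ℝ):ℂ)) with hw2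
    have hfd : HasFDerivAt (SWcone p q)
        ((SWaux.Sd1 (s - p) p 0 z • SWaux.idS w₁ + SWaux.Sd2 (s - p) p 0 z • SWaux.cjS w₁)
          + (SWaux.Sd1 (s - q) 0 q z • SWaux.idS w₂
              + SWaux.Sd2 (s - q) 0 q z • SWaux.cjS w₂)) z := by
      have hev : SWcone p q =ᶠ[nhds z]
          fun y => SWaux.S (s - p) p 0 y • w₁ + SWaux.S (s - q) 0 q y • w₂ := by
        filter_upwards [IsOpen.mem_nhds isOpen_ne hz] with y hy
        exact SWaux.SWcone_rep p q hy
      exact ((SWaux.hasFDerivAt_S_smul w₁ hz (s-(p:ℝ)) p 0).add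
        (SWaux.hasFDerivAt_S_smul w₂ hz (s-(q:ℝ)) 0 q)).congr_of_eventuallyEq hev
    have hx := SWaux.pdx_eq hfd
    have hy := SWaux.pdy_eq hfd
    have hD1 : pdx (SWcone p q) z
        = ((SWaux.Sd1 (s-(p:ℝ)) p 0 z + SWaux.Sd2 (s-(p:ℝ)) p 0 z) * ((ka:ℝ):ℂ),
           (SWaux.Sd1 (s-(q:ℝ)) 0 q z + SWaux.Sd2 (s-(q:ℝ)) 0 q z)
             * (Complex.I * ((kb:ℝ):ℂ))) := by
      rw [hx]
      simp only [ContinuousLinearMap.add_apply, ContinuousLinearMap.smul_apply,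
        SWaux.idS_apply, SWaux.cjS_apply, map_one, one_smul]
      apply Prod.ext <;>
        simp [hw1, hw2, Prod.fst_add, Prod.snd_add, Prod.smul_fst, Prod.smul_snd,
          smul_eq_mul] <;> ring
    have hDI : pdy (SWcone p q) z
        = (((SWaux.Sd1 (s-(p:ℝ)) p 0 z - SWaux.Sd2 (s-(p:ℝ)) p 0 z) * Complex.I) * ((ka:ℝ):ℂ),
           ((SWaux.Sd1 (s-(q:ℝ)) 0 q z - SWaux.Sd2 (s-(q:ℝ)) 0 q z) * Complex.I)
             * (Complex.I * ((kb:ℝ):ℂ))) := by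
      rw [hy]
      simp only [ContinuousLinearMap.add_apply, ContinuousLinearMap.smul_apply,
        SWaux.idS_apply, SWaux.cjS_apply, Complex.conj_I]
      apply Prod.ext <;>
        simp [hw1, hw2, Prod.fst_add, Prod.snd_add, Prod.smul_fst, Prod.smul_snd,
          smul_eq_mul] <;> ring
    rw [hD1, hDI, SWaux.Sd_sum_one hz (s-(p:ℝ)) p hp, SWaux.Sd_diff_one hz (s-(p:ℝ)) p hp,
      SWaux.Sd_sum_two hz (s-(q:ℝ)) q hq, SWaux.Sd_diff_two hz (s-(q:ℝ)) q hq]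
    dsimp only
    set Xr : ℝ := ‖z‖ ^ (s - (p:ℝ) - 2) with hXr
    set Yr : ℝ := ‖z‖ ^ (s - (q:ℝ) - 2) with hYr
    set A1 : ℂ := ((s - (p:ℝ) : ℝ) : ℂ) * ((z.re : ℝ) : ℂ) + ((p:ℕ):ℂ) * (starRingEnd ℂ) z with hA1
    set B1 : ℂ := ((s - (p:ℝ) : ℝ) : ℂ) * ((z.im : ℝ) : ℂ)
      + ((p:ℕ):ℂ) * Complex.I * (starRingEnd ℂ) z with hB1
    set A2 : ℂ := ((s - (q:ℝ) : ℝ) : ℂ) * ((z.re : ℝ) : ℂ) + ((q:ℕ):ℂ) * z with hA2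
    set B2 : ℂ := ((s - (q:ℝ) : ℝ) : ℂ) * ((z.im : ℝ) : ℂ)
      - ((q:ℕ):ℂ) * Complex.I * z with hB2
    set M : ℝ := ‖z‖ ^ (2*s - 4) with hM
    have hzp' : z ^ p * (starRingEnd ℂ) z ^ p = (((‖z‖:ℝ):ℂ)) ^ (2*p) := by
      rw [← mul_pow, SWaux.aux_conj_sq, ← pow_mul]
    have hzq' : ((starRingEnd ℂ) z) ^ q * z ^ q = (((‖z‖:ℝ):ℂ)) ^ (2*q) := by
      rw [← mul_pow, mul_comm ((starRingEnd ℂ) z) z, SWaux.aux_conj_sq, ← pow_mul]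
    have hKX : ka^2 * Xr^2 * ‖z‖^(2*p) = ((q:ℝ)/((p:ℝ)+(q:ℝ))) * M := by
      have h1 : ka^2 = (q:ℝ)/((p:ℝ)+(q:ℝ)) := by
        rw [hkadef, div_pow, Real.sq_sqrt hq'.le, Real.sq_sqrt hpq2.le]
      have h2 : Xr^2 * ‖z‖^(2*p) = M := by
        rw [hXr, hM, ← Real.rpow_natCast (‖z‖ ^ (s - (p:ℝ) - 2)) 2, ← Real.rpow_mul hR.le,
          ← Real.rpow_natCast ‖z‖ (2*p), ← Real.rpow_add hR]
        congr 1
        push_cast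
        ring
      rw [mul_assoc, h2, h1]
    have hKY : kb^2 * Yr^2 * ‖z‖^(2*q) = ((p:ℝ)/((p:ℝ)+(q:ℝ))) * M := by
      have h1 : kb^2 = (p:ℝ)/((p:ℝ)+(q:ℝ)) := by
        rw [hkbdef, div_pow, Real.sq_sqrt hp'.le, Real.sq_sqrt hpq2.le]
      have h2 : Yr^2 * ‖z‖^(2*q) = M := by
        rw [hYr, hM, ← Real.rpow_natCast (‖z‖ ^ (s - (q:ℝ) - 2)) 2, ← Real.rpow_mul hR.le,
          ← Real.rpow_natCast ‖z‖ (2*q), ← Real.rpow_add hR]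
        congr 1
        push_cast
        ring
      rw [mul_assoc, h2, h1]
    have hMpos : (0:ℝ) < M := Real.rpow_pos_of_pos hR _
    refine ⟨?_, ?_, ?_⟩
    · -- first conformality identity
      have hprod1 : (((Xr:ℝ):ℂ) * z ^ p * A1 * ((ka:ℝ):ℂ))
            * (starRingEnd ℂ) (((Xr:ℝ):ℂ) * z ^ p * B1 * ((ka:ℝ):ℂ))
          = ((((q:ℝ)/((p:ℝ)+(q:ℝ))) * M : ℝ) : ℂ) * (A1 * (starRingEnd ℂ) B1) := by
        rw [show ((((q:ℝ)/((p:ℝ)+(q:ℝ))) * M : ℝ) : ℂ)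
            = (((ka^2 * Xr^2 * ‖z‖^(2*p) : ℝ)) : ℂ) from by rw [hKX]]
        simp only [map_mul, map_pow, Complex.conj_ofReal]
        push_cast
        linear_combination (((ka:ℝ):ℂ))^2 * (((Xr:ℝ):ℂ))^2 * A1 * ((starRingEnd ℂ) B1) * hzp'
      have hprod2 : (((Yr:ℝ):ℂ) * ((starRingEnd ℂ) z) ^ q * A2 * (Complex.I * ((kb:ℝ):ℂ)))
            * (starRingEnd ℂ) (((Yr:ℝ):ℂ) * ((starRingEnd ℂ) z) ^ q * B2 * (Complex.I * ((kb:ℝ):ℂ)))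
          = ((((p:ℝ)/((p:ℝ)+(q:ℝ))) * M : ℝ) : ℂ) * (A2 * (starRingEnd ℂ) B2) := by
        rw [show ((((p:ℝ)/((p:ℝ)+(q:ℝ))) * M : ℝ) : ℂ)
            = (((kb^2 * Yr^2 * ‖z‖^(2*q) : ℝ)) : ℂ) from by rw [hKY]]
        simp only [map_mul, Complex.conj_ofReal, map_pow, Complex.conj_conj, Complex.conj_I]
        push_cast
        linear_combination
          ((((kb:ℝ):ℂ))^2 * (((Yr:ℝ):ℂ))^2 * A2 * ((starRingEnd ℂ) B2)) * hzq'
          + (-(((kb:ℝ):ℂ))^2 * (((Yr:ℝ):ℂ))^2 * A2 * ((starRingEnd ℂ) B2)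
              * (((starRingEnd ℂ) z) ^ q * z ^ q)) * Complex.I_mul_I
      rw [hprod1, hprod2, Complex.add_re, Complex.re_ofReal_mul, Complex.re_ofReal_mul]
      have hE1 : (A1 * (starRingEnd ℂ) B1).re
          = ((s-(p:ℝ))^2 + 2*(s-(p:ℝ))*(p:ℝ)) * (z.re * z.im) := by
        rw [hA1, hB1]
        simp [Complex.mul_re, Complex.mul_im, Complex.add_re, Complex.add_im,
          Complex.conj_re, Complex.conj_im, Complex.I_re, Complex.I_im,
          Complex.ofReal_re, Complex.ofReal_im]
        ring
      have hE2 : (A2 * (starRingEnd ℂ) B2).re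
          = ((s-(q:ℝ))^2 + 2*(s-(q:ℝ))*(q:ℝ)) * (z.re * z.im) := by
        rw [hA2, hB2]
        simp [Complex.mul_re, Complex.mul_im, Complex.add_re, Complex.add_im,
          Complex.sub_re, Complex.sub_im, Complex.conj_re, Complex.conj_im,
          Complex.I_re, Complex.I_im, Complex.ofReal_re, Complex.ofReal_im]
        ring
      rw [hE1, hE2]
      field_simp
      linear_combination (((p:ℝ)+(q:ℝ)) * M * z.re * z.im) * hs2
    · -- norm identity
      have hnormSq : ∀ w : ℂ, ‖w‖^2 = Complex.normSq w := fun w => by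
        rw [Complex.sq_norm]
      have hnsqz : Complex.normSq z = ‖z‖^2 := by
        rw [Complex.normSq_eq_norm_sq]
      have hn1 : ‖(((Xr:ℝ):ℂ) * z ^ p * A1 * ((ka:ℝ):ℂ))‖^2
          = ((q:ℝ)/((p:ℝ)+(q:ℝ))) * M * Complex.normSq A1 := by
        rw [hnormSq, ← hKX]
        simp only [map_mul, map_pow, Complex.normSq_ofReal, hnsqz, ← pow_mul]
        ring
      have hn2 : ‖(((Yr:ℝ):ℂ) * ((starRingEnd ℂ) z) ^ q * A2 * (Complex.I * ((kb:ℝ):ℂ)))‖^2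
          = ((p:ℝ)/((p:ℝ)+(q:ℝ))) * M * Complex.normSq A2 := by
        rw [hnormSq, ← hKY]
        simp only [map_mul, map_pow, Complex.normSq_ofReal, Complex.normSq_conj,
          Complex.normSq_I, hnsqz, ← pow_mul]
        ring
      have hn3 : ‖(((Xr:ℝ):ℂ) * z ^ p * B1 * ((ka:ℝ):ℂ))‖^2
          = ((q:ℝ)/((p:ℝ)+(q:ℝ))) * M * Complex.normSq B1 := by
        rw [hnormSq, ← hKX]
        simp only [map_mul, map_pow, Complex.normSq_ofReal, hnsqz, ← pow_mul]
        ring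
      have hn4 : ‖(((Yr:ℝ):ℂ) * ((starRingEnd ℂ) z) ^ q * B2 * (Complex.I * ((kb:ℝ):ℂ)))‖^2
          = ((p:ℝ)/((p:ℝ)+(q:ℝ))) * M * Complex.normSq B2 := by
        rw [hnormSq, ← hKY]
        simp only [map_mul, map_pow, Complex.normSq_ofReal, Complex.normSq_conj,
          Complex.normSq_I, hnsqz, ← pow_mul]
        ring
      rw [hn1, hn2, hn3, hn4]
      have hvA1 : Complex.normSq A1
          = ((s-(p:ℝ))*z.re + (p:ℝ)*z.re)^2 + ((p:ℝ)*z.im)^2 := by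
        rw [hA1]
        simp [Complex.normSq_apply, Complex.add_re, Complex.add_im, Complex.mul_re,
          Complex.mul_im, Complex.conj_re, Complex.conj_im]
        ring
      have hvB1 : Complex.normSq B1
          = ((s-(p:ℝ))*z.im + (p:ℝ)*z.im)^2 + ((p:ℝ)*z.re)^2 := by
        rw [hB1]
        simp [Complex.normSq_apply, Complex.add_re, Complex.add_im, Complex.mul_re,
          Complex.mul_im, Complex.conj_re, Complex.conj_im, Complex.I_re, Complex.I_im]
        ring
      have hvA2 : Complex.normSq A2
          = ((s-(q:ℝ))*z.re + (q:ℝ)*z.re)^2 + ((q:ℝ)*z.im)^2 := by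
        rw [hA2]
        simp [Complex.normSq_apply, Complex.add_re, Complex.add_im, Complex.mul_re,
          Complex.mul_im]
        ring
      have hvB2 : Complex.normSq B2
          = ((s-(q:ℝ))*z.im + (q:ℝ)*z.im)^2 + ((q:ℝ)*z.re)^2 := by
        rw [hB2]
        simp [Complex.normSq_apply, Complex.sub_re, Complex.sub_im, Complex.mul_re,
          Complex.mul_im, Complex.I_re, Complex.I_im]
        ring
      rw [hvA1, hvB1, hvA2, hvB2]
      field_simp
      linear_combination (((p:ℝ)+(q:ℝ)) * (z.re^2 - z.im^2)) * hs2
    · -- Lagrangian identity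
      have hprod3a : (((Xr:ℝ):ℂ) * z ^ p * A1 * ((ka:ℝ):ℂ))
            * (starRingEnd ℂ) (Complex.I * (((Xr:ℝ):ℂ) * z ^ p * B1 * ((ka:ℝ):ℂ)))
          = ((((q:ℝ)/((p:ℝ)+(q:ℝ))) * M : ℝ) : ℂ)
              * (A1 * (starRingEnd ℂ) (Complex.I * B1)) := by
        rw [show ((((q:ℝ)/((p:ℝ)+(q:ℝ))) * M : ℝ) : ℂ)
            = (((ka^2 * Xr^2 * ‖z‖^(2*p) : ℝ)) : ℂ) from by rw [hKX]]
        simp only [map_mul, map_pow, Complex.conj_ofReal, Complex.conj_I]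
        push_cast
        linear_combination (-Complex.I * (((ka:ℝ):ℂ))^2 * (((Xr:ℝ):ℂ))^2 * A1
          * ((starRingEnd ℂ) B1)) * hzp'
      have hprod3b : (((Yr:ℝ):ℂ) * ((starRingEnd ℂ) z) ^ q * A2 * (Complex.I * ((kb:ℝ):ℂ)))
            * (starRingEnd ℂ) (Complex.I
                * (((Yr:ℝ):ℂ) * ((starRingEnd ℂ) z) ^ q * B2 * (Complex.I * ((kb:ℝ):ℂ))))
          = ((((p:ℝ)/((p:ℝ)+(q:ℝ))) * M : ℝ) : ℂ)
              * (A2 * (starRingEnd ℂ) (Complex.I * B2)) := by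
        rw [show ((((p:ℝ)/((p:ℝ)+(q:ℝ))) * M : ℝ) : ℂ)
            = (((kb^2 * Yr^2 * ‖z‖^(2*q) : ℝ)) : ℂ) from by rw [hKY]]
        simp only [map_mul, map_pow, Complex.conj_ofReal, Complex.conj_I, Complex.conj_conj]
        push_cast
        linear_combination
          ((-Complex.I) * (((kb:ℝ):ℂ))^2 * (((Yr:ℝ):ℂ))^2 * A2 * ((starRingEnd ℂ) B2)) * hzq'
          + ((((kb:ℝ):ℂ))^2 * (((Yr:ℝ):ℂ))^2 * A2 * ((starRingEnd ℂ) B2) * Complex.I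
              * (((starRingEnd ℂ) z) ^ q * z ^ q)) * Complex.I_mul_I
      rw [hprod3a, hprod3b, Complex.add_re, Complex.re_ofReal_mul, Complex.re_ofReal_mul]
      have hE3a : (A1 * (starRingEnd ℂ) (Complex.I * B1)).re
          = -((s-(p:ℝ))*(p:ℝ) + (p:ℝ)^2) * (z.re^2 + z.im^2) := by
        rw [hA1, hB1]
        simp [Complex.mul_re, Complex.mul_im, Complex.add_re, Complex.add_im,
          Complex.conj_re, Complex.conj_im, Complex.I_re, Complex.I_im]
        ring
      have hE3b : (A2 * (starRingEnd ℂ) (Complex.I * B2)).re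
          = ((s-(q:ℝ))*(q:ℝ) + (q:ℝ)^2) * (z.re^2 + z.im^2) := by
        rw [hA2, hB2]
        simp [Complex.mul_re, Complex.mul_im, Complex.add_re, Complex.add_im,
          Complex.sub_re, Complex.sub_im, Complex.conj_re, Complex.conj_im,
          Complex.I_re, Complex.I_im]
        ring
      rw [hE3a, hE3b]
      field_simp
      ring
  · intro hnotsq
    have hhom := SWaux.SWcone_isHomog p q
    have hne : Real.sqrt ((p:ℝ)*q) ≠ ((⌊Real.sqrt ((p:ℝ)*q)⌋₊ : ℕ) : ℝ) := by
      intro heq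
      apply hnotsq
      refine ⟨⌊Real.sqrt ((p:ℝ)*q)⌋₊, ?_⟩
      have h1 : (((⌊Real.sqrt ((p:ℝ)*q)⌋₊ : ℕ) : ℝ))^2 = (p:ℝ)*q := by
        rw [← heq]; exact hs2
      exact_mod_cast h1.symm
    have hn_lt : ((⌊Real.sqrt ((p:ℝ)*q)⌋₊ : ℕ) : ℝ) < Real.sqrt ((p:ℝ)*q) :=
      lt_of_le_of_ne (Nat.floor_le (Real.sqrt_nonneg _)) (fun h => hne h.symm)
    have hlt1 : Real.sqrt ((p:ℝ)*q) - (⌊Real.sqrt ((p:ℝ)*q)⌋₊ : ℕ) < 1 := by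
      have := Nat.lt_floor_add_one (Real.sqrt ((p:ℝ)*q))
      linarith
    constructor
    · exact_mod_cast SWaux.isHomog_contDiff (⌊Real.sqrt ((p:ℝ)*q)⌋₊) hhom hn_lt
    · exact SWaux.isHomog_holder
        (SWaux.isHomog_iteratedFDeriv (⌊Real.sqrt ((p:ℝ)*q)⌋₊) hhom hn_lt)
        (by linarith) hlt1
end
end
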